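/- arXiv:2507.11650 — 3 statements merged into one kernel-verified Lean document; each statement's English description precedes it below -/
import Mathlib

section
/- Let A be an OI-algebra over a commutative ring K with colimit 𝒜 = lim A. If M is a Noetherian OI-module over A (i.e., every OI-submodule of M is finitely generated), then its colimit ℳ = lim M is a Noetherian Inc-module over 𝒜 (i.e., every Inc-submodule of ℳ is finitely generated). -/
/-- The monoid `Inc` of strictly increasing maps `ℕ → ℕ`, under composition. -/
def Inc : Type := {f : ℕ → ℕ // StrictMono f}

instance : Monoid Inc where
  mul σ τ := ⟨σ.1 ∘ τ.1, σ.2.comp τ.2⟩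
  one := ⟨id, strictMono_id⟩
  mul_assoc _ _ _ := rfl
  one_mul _ := rfl
  mul_one _ := rfl

/-- `Hom_OI([d], ℕ)`: strictly increasing maps `[d] → ℕ`. -/
def OIHomNat (d : ℕ) : Type := {π : Fin d → ℕ // StrictMono π}

/-- The action of `Inc` on `Hom_OI([d], ℕ)` by composition. -/
def incAct {d : ℕ} (τ : Inc) (π : OIHomNat d) : OIHomNat d :=
  ⟨τ.1 ∘ π.1, τ.2.comp π.2⟩

/-- The identity OI-morphism `[n] → [n]`. -/
def oeId (n : ℕ) : Fin n ↪o Fin n := OrderEmbedding.ofStrictMono id strictMono_id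

/-- The inclusion OI-morphism `ι_{m,n} : [m] → [n]`, `j ↦ j`, for `m ≤ n`. -/
def oeLE {m n : ℕ} (h : m ≤ n) : Fin m ↪o Fin n := Fin.castLEOrderEmb h

/-- The width `τ(n)` of the target of the OI-morphism `τ·id_n` induced by `τ ∈ Inc`
(in 0-based indexing: `[n] = {0,…,n-1}` is mapped into `{0,…,τ(n-1)}`). -/
def incWidth (τ : Inc) : ℕ → ℕ
  | 0 => 0
  | n + 1 => τ.1 n + 1

/-- The OI-morphism `τ·id_n : [n] → [τ(n)]`, `j ↦ τ(j)`, induced by `τ ∈ Inc`. -/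
def incRestrict (τ : Inc) (n : ℕ) : Fin n ↪o Fin (incWidth τ n) :=
  OrderEmbedding.ofStrictMono
    (fun j => ⟨τ.1 j, by
      cases n with
      | zero => exact absurd j.isLt (Nat.not_lt_zero _)
      | succ k => exact Nat.lt_succ_of_le (τ.2.le_iff_le.mpr (Nat.lt_succ_iff.mp j.isLt))⟩)
    (fun a b hab => by exact τ.2 (show (a : ℕ) < b from hab))

section Colim

variable {K : Type} [CommRing K]

/-- An OI-module over an OI-algebra `A` (unbundled): width components, functorial
structure maps, and compatibility with the `A`-module structures. -/
structure OIMod (K : Type) [CommRing K] (A : ℕ → Type) [∀ n, CommRing (A n)]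
    [∀ n, Algebra K (A n)]
    (Amap : ∀ {m n : ℕ}, (Fin m ↪o Fin n) → (A m →ₐ[K] A n)) where
  M : ℕ → Type
  [acg : ∀ n, AddCommGroup (M n)]
  [mod : ∀ n, Module (A n) (M n)]
  map : ∀ {m n : ℕ}, (Fin m ↪o Fin n) → (M m →+ M n)
  map_id : ∀ (n : ℕ) (x : M n), map (oeId n) x = x
  map_comp : ∀ {m n p : ℕ} (ε : Fin m ↪o Fin n) (δ : Fin n ↪o Fin p) (x : M m),
    map (ε.trans δ) x = map δ (map ε x)
  map_smul : ∀ {m n : ℕ} (ε : Fin m ↪o Fin n) (a : A m) (x : M m),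
    map ε (a • x) = Amap ε a • map ε x

attribute [instance] OIMod.acg OIMod.mod

/-- Presentation of an additive group `ℳ` as the colimit `lim M` of an OI-module
`M` along the direct system induced by the inclusions `ι_{m,n}`. -/
structure ColimPres {A : ℕ → Type} [∀ n, CommRing (A n)] [∀ n, Algebra K (A n)]
    {Amap : ∀ {m n : ℕ}, (Fin m ↪o Fin n) → (A m →ₐ[K] A n)}
    (D : OIMod K A @Amap) (ℳ : Type) [AddCommGroup ℳ] where
  μ : ∀ n, D.M n →+ ℳ
  compat : ∀ {m n : ℕ} (h : m ≤ n) (x : D.M m), μ n (D.map (oeLE h) x) = μ m x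
  jointSurj : ∀ q : ℳ, ∃ (n : ℕ) (x : D.M n), μ n x = q
  eq_iff : ∀ {m n : ℕ} (x : D.M m) (y : D.M n), μ m x = μ n y ↔
    ∃ (p : ℕ) (h₁ : m ≤ p) (h₂ : n ≤ p), D.map (oeLE h₁) x = D.map (oeLE h₂) y

end Colim

/- Every OI-morphism `ε : [m] → [n]` is `τ·id_m` followed by an inclusion, so on the colimit
`ℳ` it acts through `τ ∈ Inc`: Inc-submodules of `ℳ` pull back to OI-submodules of `M`, and a
finite generating set of the pull-back of `𝒮` maps onto one of `𝒮`. -/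

theorem exists_eq_incRestrict_trans_oeLE {m n : ℕ} (ε : Fin m ↪o Fin n) :
    ∃ (τ : Inc) (h : incWidth τ m ≤ n), ε = (incRestrict τ m).trans (oeLE h) := by
  -- extend `ε` past `m` by `j ↦ n + j`, which stays above every value of `ε`
  let f : ℕ → ℕ := fun j => if h : j < m then ε ⟨j, h⟩ else n + j
  have hf : StrictMono f := by
    intro a b hab
    simp only [f]
    split_ifs with ha hb hb
    · exact ε.lt_iff_lt.mpr (Fin.mk_lt_mk.mpr hab)
    · have := (ε ⟨a, ha⟩).isLt
      omega
    · omega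
    · omega
  refine ⟨⟨f, hf⟩, ?_, ?_⟩
  · cases m with
    | zero => exact Nat.zero_le n
    | succ k =>
      show f k + 1 ≤ n
      simp only [f, dif_pos k.lt_succ_self]
      exact (ε _).isLt
  · ext j
    simp [incRestrict, oeLE, f]

section

variable {K : Type} [CommRing K] {A : ℕ → Type} [∀ n, CommRing (A n)] [∀ n, Algebra K (A n)]
  {Amap : ∀ {m n : ℕ}, (Fin m ↪o Fin n) → (A m →ₐ[K] A n)} {M : OIMod K A @Amap}

namespace OIMod

variable (M) in
def IsStable (S : ∀ n, Submodule (A n) (M.M n)) : Prop :=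
  ∀ (m n : ℕ) (ε : Fin m ↪o Fin n) (x : M.M m), x ∈ S m → M.map ε x ∈ S n

end OIMod

namespace ColimPres

variable {ℳ : Type} [AddCommGroup ℳ] (c : ColimPres M ℳ)

theorem μ_map_mem_of_forall_act_mem {actM : Inc → (ℳ →+ ℳ)}
    (hactM : ∀ (τ : Inc) (n : ℕ) (x : M.M n),
      actM τ (c.μ n x) = c.μ (incWidth τ n) (M.map (incRestrict τ n) x))
    {𝒯 : Set ℳ} (h𝒯 : ∀ (τ : Inc) (x : ℳ), x ∈ 𝒯 → actM τ x ∈ 𝒯)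
    {m n : ℕ} (ε : Fin m ↪o Fin n) {x : M.M m} (hx : c.μ m x ∈ 𝒯) :
    c.μ n (M.map ε x) ∈ 𝒯 := by
  obtain ⟨τ, h, rfl⟩ := exists_eq_incRestrict_trans_oeLE ε
  rw [M.map_comp, c.compat, ← hactM]
  exact h𝒯 τ _ hx

variable {𝒜 : Type} [CommRing 𝒜] [Module 𝒜 ℳ] {κ : ∀ n, A n →+* 𝒜}

theorem μ_smul
    (hsmul : ∀ (m n : ℕ) (a : A m) (x : M.M n),
      κ m a • c.μ n x = c.μ (max m n)
        (Amap (oeLE (le_max_left m n)) a • M.map (oeLE (le_max_right m n)) x))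
    (n : ℕ) (a : A n) (x : M.M n) : c.μ n (a • x) = κ n a • c.μ n x := by
  rw [hsmul, ← M.map_smul, c.compat]

variable (κ) in
def comap (hsmul : ∀ (n : ℕ) (a : A n) (x : M.M n), c.μ n (a • x) = κ n a • c.μ n x)
    (𝒯 : Submodule 𝒜 ℳ) (n : ℕ) : Submodule (A n) (M.M n) :=
  𝒯.comap { toFun := c.μ n, map_add' := map_add _, map_smul' := hsmul n }

variable (hsmul : ∀ (n : ℕ) (a : A n) (x : M.M n), c.μ n (a • x) = κ n a • c.μ n x)

theorem isStable_comap {actM : Inc → (ℳ →+ ℳ)}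
    (hactM : ∀ (τ : Inc) (n : ℕ) (x : M.M n),
      actM τ (c.μ n x) = c.μ (incWidth τ n) (M.map (incRestrict τ n) x))
    {𝒯 : Submodule 𝒜 ℳ} (h𝒯 : ∀ (τ : Inc) (x : ℳ), x ∈ 𝒯 → actM τ x ∈ 𝒯) :
    M.IsStable (c.comap κ hsmul 𝒯) :=
  fun _ _ ε _ hx => c.μ_map_mem_of_forall_act_mem hactM h𝒯 ε hx

end ColimPres

end

theorem stmt_15_general {K : Type} [CommRing K]
    (A : ℕ → Type) [∀ n, CommRing (A n)] [∀ n, Algebra K (A n)]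
    (Amap : ∀ {m n : ℕ}, (Fin m ↪o Fin n) → (A m →ₐ[K] A n))
    -- the colimit Inc-algebra `𝒜 = lim A`
    (𝒜 : Type) [CommRing 𝒜] [Algebra K 𝒜] (κ : ∀ n, A n →ₐ[K] 𝒜)
    -- the OI-module `M` and its colimit `ℳ = lim M`
    (M : OIMod K A @Amap)
    (ℳ : Type) [AddCommGroup ℳ] [Module 𝒜 ℳ] (c : ColimPres M ℳ)
    (hsmul : ∀ (m n : ℕ) (a : A m) (x : M.M n),
      κ m a • c.μ n x = c.μ (max m n)
        (Amap (oeLE (le_max_left m n)) a • M.map (oeLE (le_max_right m n)) x))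
    (actM : Inc → (ℳ →+ ℳ))
    (hactM : ∀ (τ : Inc) (n : ℕ) (x : M.M n),
      actM τ (c.μ n x) = c.μ (incWidth τ n) (M.map (incRestrict τ n) x))
    -- `M` is a Noetherian OI-module: every OI-submodule is finitely generated
    (hnoeth : ∀ S : ∀ n, Submodule (A n) (M.M n),
      (∀ (m n : ℕ) (ε : Fin m ↪o Fin n) (x : M.M m), x ∈ S m → M.map ε x ∈ S n) →
      ∃ (k : ℕ) (w : Fin k → ℕ) (g : ∀ i, M.M (w i)),
        (∀ i, g i ∈ S (w i)) ∧
        ∀ T : ∀ n, Submodule (A n) (M.M n),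
          (∀ (m n : ℕ) (ε : Fin m ↪o Fin n) (x : M.M m), x ∈ T m → M.map ε x ∈ T n) →
          (∀ i, g i ∈ T (w i)) →
          ∀ n, S n ≤ T n) :
    -- then `ℳ` is a Noetherian Inc-module: every Inc-stable submodule is finitely
    -- generated as an Inc-module
    ∀ 𝒮 : Submodule 𝒜 ℳ,
      (∀ (τ : Inc) (x : ℳ), x ∈ 𝒮 → actM τ x ∈ 𝒮) →
      ∃ (k : ℕ) (q : Fin k → ℳ),
        (∀ i, q i ∈ 𝒮) ∧
        ∀ 𝒯 : Submodule 𝒜 ℳ,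
          (∀ (τ : Inc) (x : ℳ), x ∈ 𝒯 → actM τ x ∈ 𝒯) →
          (∀ i, q i ∈ 𝒯) →
          𝒮 ≤ 𝒯 := by
  intro 𝒮 h𝒮
  have hμsmul := c.μ_smul (κ := fun n => (κ n : A n →+* 𝒜)) hsmul
  obtain ⟨k, w, g, hg, hmin⟩ :=
    hnoeth (c.comap _ hμsmul 𝒮) (c.isStable_comap hμsmul hactM h𝒮)
  refine ⟨k, fun i => c.μ (w i) (g i), hg, fun 𝒯 h𝒯 hq z hz => ?_⟩
  obtain ⟨n, x, rfl⟩ := c.jointSurj z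
  exact hmin (c.comap _ hμsmul 𝒯) (c.isStable_comap hμsmul hactM h𝒯) hq n hz

/-- Let `A` be an OI-algebra over a commutative ring `K` with
colimit `𝒜 = lim A`. If `M` is a Noetherian OI-module over `A` (every OI-submodule
of `M` is finitely generated), then its colimit `ℳ = lim M` — with the `𝒜`-module
structure `[a]·[q] = [A(ι_{m,k})(a)·M(ι_{n,k})(q)]` and Inc-action
`τ·[q] = [M(τ·id_n)(q)]` — is a Noetherian Inc-module over `𝒜` (every Inc-stable
submodule of `ℳ` is finitely generated as an Inc-module). -/
theorem stmt_15 {K : Type} [CommRing K]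
    (A : ℕ → Type) [∀ n, CommRing (A n)] [∀ n, Algebra K (A n)]
    (Amap : ∀ {m n : ℕ}, (Fin m ↪o Fin n) → (A m →ₐ[K] A n))
    (hAid : ∀ (n : ℕ) (a : A n), Amap (oeId n) a = a)
    (hAcomp : ∀ {m n p : ℕ} (ε : Fin m ↪o Fin n) (δ : Fin n ↪o Fin p) (a : A m),
      Amap (ε.trans δ) a = Amap δ (Amap ε a))
    -- the colimit Inc-algebra `𝒜 = lim A`
    (𝒜 : Type) [CommRing 𝒜] [Algebra K 𝒜] (κ : ∀ n, A n →ₐ[K] 𝒜)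
    (hκ : ∀ {m n : ℕ} (h : m ≤ n) (a : A m), κ n (Amap (oeLE h) a) = κ m a)
    (hκsurj : ∀ x : 𝒜, ∃ (n : ℕ) (a : A n), κ n a = x)
    (hκeq : ∀ {m n : ℕ} (a : A m) (b : A n), κ m a = κ n b ↔
      ∃ (p : ℕ) (h₁ : m ≤ p) (h₂ : n ≤ p), Amap (oeLE h₁) a = Amap (oeLE h₂) b)
    (actA : Inc → (𝒜 →ₐ[K] 𝒜))
    (hactA : ∀ (τ : Inc) (n : ℕ) (a : A n),
      actA τ (κ n a) = κ (incWidth τ n) (Amap (incRestrict τ n) a))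
    -- the OI-module `M` and its colimit `ℳ = lim M`
    (M : OIMod K A @Amap)
    (ℳ : Type) [AddCommGroup ℳ] [Module 𝒜 ℳ] (c : ColimPres M ℳ)
    (hsmul : ∀ (m n : ℕ) (a : A m) (x : M.M n),
      κ m a • c.μ n x = c.μ (max m n)
        (Amap (oeLE (le_max_left m n)) a • M.map (oeLE (le_max_right m n)) x))
    (actM : Inc → (ℳ →+ ℳ))
    (hactM : ∀ (τ : Inc) (n : ℕ) (x : M.M n),
      actM τ (c.μ n x) = c.μ (incWidth τ n) (M.map (incRestrict τ n) x))
    -- `M` is a Noetherian OI-module: every OI-submodule is finitely generated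
    (hnoeth : ∀ S : ∀ n, Submodule (A n) (M.M n),
      (∀ (m n : ℕ) (ε : Fin m ↪o Fin n) (x : M.M m), x ∈ S m → M.map ε x ∈ S n) →
      ∃ (k : ℕ) (w : Fin k → ℕ) (g : ∀ i, M.M (w i)),
        (∀ i, g i ∈ S (w i)) ∧
        ∀ T : ∀ n, Submodule (A n) (M.M n),
          (∀ (m n : ℕ) (ε : Fin m ↪o Fin n) (x : M.M m), x ∈ T m → M.map ε x ∈ T n) →
          (∀ i, g i ∈ T (w i)) →
          ∀ n, S n ≤ T n) :
    -- then `ℳ` is a Noetherian Inc-module: every Inc-stable submodule is finitely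
    -- generated as an Inc-module
    ∀ 𝒮 : Submodule 𝒜 ℳ,
      (∀ (τ : Inc) (x : ℳ), x ∈ 𝒮 → actM τ x ∈ 𝒮) →
      ∃ (k : ℕ) (q : Fin k → ℳ),
        (∀ i, q i ∈ 𝒮) ∧
        ∀ 𝒯 : Submodule 𝒜 ℳ,
          (∀ (τ : Inc) (x : ℳ), x ∈ 𝒯 → actM τ x ∈ 𝒯) →
          (∀ i, q i ∈ 𝒯) →
          𝒮 ≤ 𝒯 :=
  stmt_15_general A Amap 𝒜 κ M ℳ c hsmul actM hactM hnoeth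
end

section
/- Let K be a Noetherian commutative ring and c ≥ 1, and let ℳ be an Inc-submodule of a finitely generated free Inc-module ℱ = ⊕_{i=1}^r F^{Inc,d_i} over 𝒫 = K[x_{i,j} : i ∈ [c], j ∈ ℕ]. Then ℳ is the colimit of an OI-module: writing ℱ = lim F with F = ⊕_{i=1}^r F^{OI,d_i} over P^{OI,c} and κ_n: F_n → ℱ the natural maps to the colimit, and choosing a finite generating set {g_1,…,g_s} of ℳ with norms ν(g_i) = min{n : g_i ∈ κ_n(F_n)}, the OI-submodule M of F generated by the unique elements b_i ∈ F_{ν(g_i)} with κ_{ν(g_i)}(b_i) = g_i satisfies lim M = ℳ. -/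
/-- The polynomial ring `𝒫 = K[x_{i,j} : i ∈ [c], j ∈ ℕ]` in `c` rows of infinitely
many variables. -/
abbrev PInf (K : Type) [CommRing K] (c : ℕ) := MvPolynomial (Fin c × ℕ) K

/-- The Inc-algebra action of `τ ∈ Inc` on `𝒫`, induced by `τ·x_{i,j} = x_{i,τ(j)}`. -/
noncomputable def incP (K : Type) [CommRing K] (c : ℕ) (τ : Inc) :
    PInf K c →ₐ[K] PInf K c :=
  MvPolynomial.rename (fun p => (p.1, τ.1 p.2))

/-- The finitely generated free Inc-module `ℱ = ⊕_{i=1}^r F^{Inc,d_i}` over `𝒫`: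
the free `𝒫`-module with basis `ε_{π,i}` indexed by pairs `(i, π)` with
`π ∈ Hom_OI([d_i], ℕ)`. -/
abbrev FreeIncP (K : Type) [CommRing K] (c : ℕ) {r : ℕ} (d : Fin r → ℕ) : Type :=
  (Σ i : Fin r, OIHomNat (d i)) →₀ PInf K c

/-- The Inc-action on the free Inc-module `ℱ`, induced by
`τ·(a ε_{π,i}) = (τ·a) ε_{τ∘π,i}`. -/
noncomputable def freeIncPAct (K : Type) [CommRing K] (c : ℕ) {r : ℕ}
    {d : Fin r → ℕ} (τ : Inc) (f : FreeIncP K c d) : FreeIncP K c d :=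
  f.sum fun p a => Finsupp.single ⟨p.1, incAct τ p.2⟩ (incP K c τ a)

/-- The width-`n` component `P^{OI,c}_n = K[x_{i,j} : i ∈ [c], j ∈ [n]]` of the
polynomial OI-algebra `P^{OI,c}`. -/
abbrev POIn (K : Type) [CommRing K] (c n : ℕ) := MvPolynomial (Fin c × Fin n) K

/-- The structure map of `P^{OI,c}` along an OI-morphism, `x_{i,j} ↦ x_{i,ε(j)}`. -/
noncomputable def POInmap (K : Type) [CommRing K] (c : ℕ) {m n : ℕ}
    (ε : Fin m ↪o Fin n) : POIn K c m →ₐ[K] POIn K c n :=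
  MvPolynomial.rename (fun p => (p.1, ε p.2))

/-- Width-`n` component of the free OI-module `F = ⊕_{i=1}^r F^{OI,d_i}` over
`P^{OI,c}`. -/
abbrev FreeOIP (K : Type) [CommRing K] (c : ℕ) {r : ℕ} (d : Fin r → ℕ) (n : ℕ) :
    Type := (Σ i : Fin r, Fin (d i) ↪o Fin n) →₀ POIn K c n

/-- The structure map of the free OI-module `F` along an OI-morphism `ε`. -/
noncomputable def freeOIPmap (K : Type) [CommRing K] (c : ℕ) {r : ℕ}
    (d : Fin r → ℕ) {m n : ℕ} (ε : Fin m ↪o Fin n) (f : FreeOIP K c d m) :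
    FreeOIP K c d n :=
  f.sum fun p a => Finsupp.single ⟨p.1, p.2.trans ε⟩ (POInmap K c ε a)

/-- The canonical map `P^{OI,c}_n → 𝒫` into the colimit. -/
noncomputable def toPInf (K : Type) [CommRing K] (c n : ℕ) :
    POIn K c n →ₐ[K] PInf K c :=
  MvPolynomial.rename (fun p => (p.1, (p.2 : ℕ)))

/-- The extension `π̃ : [d] → ℕ` of an OI-morphism `π : [d] → [n]`. -/
def extendHom {d n : ℕ} (π : Fin d ↪o Fin n) : OIHomNat d :=
  ⟨fun j => (π j : ℕ), fun _ _ h => π.strictMono h⟩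

/-- The natural map `κ_n : F_n → ℱ` from the width-`n` component of the free
OI-module `F = ⊕ F^{OI,d_i}` to its colimit, the free Inc-module
`ℱ = ⊕ F^{Inc,d_i}`. -/
noncomputable def kappaF (K : Type) [CommRing K] (c : ℕ) {r : ℕ} (d : Fin r → ℕ)
    (n : ℕ) (f : FreeOIP K c d n) : FreeIncP K c d :=
  f.sum fun p a => Finsupp.single ⟨p.1, extendHom p.2⟩ (toPInf K c n a)

/-- The norm `ν(q) = min {n : q ∈ κ_n(F_n)}` of an element `q ∈ ℱ`. -/
noncomputable def normF (K : Type) [CommRing K] (c : ℕ) {r : ℕ} (d : Fin r → ℕ)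
    (q : FreeIncP K c d) : ℕ :=
  sInf {n | ∃ y : FreeOIP K c d n, kappaF K c d n y = q}

theorem Finsupp.sum_single_map_add {α β M N : Type*} [AddCommMonoid M] [AddCommMonoid N]
    (e : α → β) (φ : M →+ N) (f g : α →₀ M) :
    ((f + g).sum fun p a => single (e p) (φ a)) =
      (f.sum fun p a => single (e p) (φ a)) + g.sum fun p a => single (e p) (φ a) :=
  sum_add_index' (fun _ => by simp) fun _ _ _ => by rw [map_add, single_add]

def incExtend {m n : ℕ} (ε : Fin m ↪o Fin n) : Inc :=
  ⟨fun j => if h : j < m then ε ⟨j, h⟩ else j + n, by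
    refine strictMono_nat_of_lt_succ fun j => ?_
    split_ifs with hj hj'
    · exact ε.strictMono (Nat.lt_succ_self j)
    · have := (ε ⟨j, hj⟩).isLt
      omega
    · omega
    · omega⟩

theorem incExtend_apply {m n : ℕ} (ε : Fin m ↪o Fin n) (j : Fin m) :
    (incExtend ε).1 j = ε j :=
  dif_pos j.isLt

section Colimit

variable {K : Type} [CommRing K] {c : ℕ} {r : ℕ} {d : Fin r → ℕ}

theorem kappaF_single {n : ℕ} (p : Σ i : Fin r, Fin (d i) ↪o Fin n) (a : POIn K c n) :
    kappaF K c d n (Finsupp.single p a) = Finsupp.single ⟨p.1, extendHom p.2⟩ (toPInf K c n a) :=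
  Finsupp.sum_single_index (by simp)

@[simp]
theorem kappaF_zero {n : ℕ} : kappaF K c d n 0 = 0 :=
  Finsupp.sum_zero_index

theorem kappaF_add {n : ℕ} (f g : FreeOIP K c d n) :
    kappaF K c d n (f + g) = kappaF K c d n f + kappaF K c d n g :=
  Finsupp.sum_single_map_add _ (toPInf K c n : POIn K c n →+ PInf K c) f g

theorem kappaF_smul {n : ℕ} (a : POIn K c n) (f : FreeOIP K c d n) :
    kappaF K c d n (a • f) = toPInf K c n a • kappaF K c d n f := by
  induction f using Finsupp.induction_linear with
  | zero => simp
  | add f g hf hg => rw [smul_add, kappaF_add, hf, hg, kappaF_add, smul_add]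
  | single p x =>
    rw [Finsupp.smul_single, kappaF_single, kappaF_single, Finsupp.smul_single, smul_eq_mul,
      smul_eq_mul, map_mul]

theorem freeOIPmap_single {m n : ℕ} (ε : Fin m ↪o Fin n) (p : Σ i : Fin r, Fin (d i) ↪o Fin m)
    (a : POIn K c m) :
    freeOIPmap K c d ε (Finsupp.single p a) =
      Finsupp.single ⟨p.1, p.2.trans ε⟩ (POInmap K c ε a) :=
  Finsupp.sum_single_index (by simp)

theorem freeOIPmap_add {m n : ℕ} (ε : Fin m ↪o Fin n) (f g : FreeOIP K c d m) :
    freeOIPmap K c d ε (f + g) = freeOIPmap K c d ε f + freeOIPmap K c d ε g :=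
  Finsupp.sum_single_map_add _ (POInmap K c ε : POIn K c m →+ POIn K c n) f g

theorem freeIncPAct_single (τ : Inc) (p : Σ i : Fin r, OIHomNat (d i)) (a : PInf K c) :
    freeIncPAct K c τ (Finsupp.single p a) = Finsupp.single ⟨p.1, incAct τ p.2⟩ (incP K c τ a) :=
  Finsupp.sum_single_index (by simp)

theorem freeIncPAct_add (τ : Inc) (f g : FreeIncP K c d) :
    freeIncPAct K c τ (f + g) = freeIncPAct K c τ f + freeIncPAct K c τ g :=
  Finsupp.sum_single_map_add _ (incP K c τ : PInf K c →+ PInf K c) f g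

theorem freeIncPAct_one (f : FreeIncP K c d) : freeIncPAct K c 1 f = f := by
  have hP : incP K c 1 = AlgHom.id K (PInf K c) := MvPolynomial.rename_id
  simp only [freeIncPAct, hP, AlgHom.id_apply]
  exact Finsupp.sum_single f

theorem exists_toPInf_eq (q : PInf K c) : ∃ (n : ℕ) (a : POIn K c n), toPInf K c n a = q := by
  obtain ⟨s, q', rfl⟩ := MvPolynomial.exists_finset_rename q
  have hs : ∀ x : s, x.1.2 < s.sup Prod.snd + 1 := fun x => Nat.lt_succ_of_le (s.le_sup x.2)
  refine ⟨s.sup Prod.snd + 1, MvPolynomial.rename (fun x => (x.1.1, ⟨x.1.2, hs x⟩)) q', ?_⟩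
  rw [toPInf, MvPolynomial.rename_rename]
  rfl

theorem kappaF_injective (n : ℕ) : Function.Injective (kappaF K c d n) := by
  let e : (Σ i : Fin r, Fin (d i) ↪o Fin n) → Σ i : Fin r, OIHomNat (d i) :=
    fun p => ⟨p.1, extendHom p.2⟩
  have he : Function.Injective e := by
    rintro ⟨i, π⟩ ⟨i', π'⟩ h
    obtain ⟨rfl, h⟩ := Sigma.mk.inj_iff.mp h
    have hπ : ∀ j, (π j : ℕ) = π' j := fun j => congrFun (congrArg Subtype.val (eq_of_heq h)) j
    rw [DFunLike.ext π π' fun j => Fin.ext (hπ j)]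
  have hP : Function.Injective (toPInf K c n) :=
    MvPolynomial.rename_injective _ fun a b h => Prod.ext (Prod.ext_iff.mp h).1
      (Fin.ext (Prod.ext_iff.mp h).2)
  have hκ : kappaF K c d n = fun f => Finsupp.mapDomain e
      (Finsupp.mapRange (toPInf K c n) (map_zero _) f) := by
    funext f
    rw [Finsupp.mapDomain, Finsupp.sum_mapRange_index (by simp)]
    rfl
  rw [hκ]
  exact (Finsupp.mapDomain_injective he).comp (Finsupp.mapRange_injective _ (map_zero _) hP)

variable {m n : ℕ} {ε : Fin m ↪o Fin n} {τ : Inc}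

theorem toPInf_POInmap (hτ : ∀ j : Fin m, τ.1 j = ε j) (a : POIn K c m) :
    toPInf K c n (POInmap K c ε a) = incP K c τ (toPInf K c m a) := by
  simp only [toPInf, POInmap, incP, MvPolynomial.rename_rename]
  exact congrArg (MvPolynomial.rename · a) (funext fun q => Prod.ext rfl (hτ q.2).symm)

theorem kappaF_freeOIPmap (hτ : ∀ j : Fin m, τ.1 j = ε j) (f : FreeOIP K c d m) :
    kappaF K c d n (freeOIPmap K c d ε f) = freeIncPAct K c τ (kappaF K c d m f) := by
  induction f using Finsupp.induction_linear with
  | zero => simp [freeOIPmap, freeIncPAct]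
  | add f g hf hg => rw [freeOIPmap_add, kappaF_add, hf, hg, kappaF_add, freeIncPAct_add]
  | single p x =>
    have hπ : extendHom (p.2.trans ε) = incAct τ (extendHom p.2) :=
      Subtype.ext (funext fun j => (hτ (p.2 j)).symm)
    rw [freeOIPmap_single, kappaF_single, kappaF_single, freeIncPAct_single, hπ,
      toPInf_POInmap hτ]

theorem toPInf_POInmap_oeLE (h : m ≤ n) (a : POIn K c m) :
    toPInf K c n (POInmap K c (oeLE h) a) = toPInf K c m a :=
  (toPInf_POInmap (τ := 1) (fun _ => rfl) a).trans (MvPolynomial.rename_id_apply _)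

theorem kappaF_freeOIPmap_oeLE (h : m ≤ n) (f : FreeOIP K c d m) :
    kappaF K c d n (freeOIPmap K c d (oeLE h) f) = kappaF K c d m f :=
  (kappaF_freeOIPmap (τ := 1) (fun _ => rfl) f).trans (freeIncPAct_one _)

end Colimit

section Submodules

variable {K : Type} [CommRing K] {c : ℕ} {r : ℕ} {d : Fin r → ℕ}

def IsOISubmodule (M : ∀ m, Submodule (POIn K c m) (FreeOIP K c d m)) : Prop :=
  ∀ (m n : ℕ) (ε : Fin m ↪o Fin n) (z : FreeOIP K c d m), z ∈ M m → freeOIPmap K c d ε z ∈ M n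

def IsIncSubmodule (ℳ : Submodule (PInf K c) (FreeIncP K c d)) : Prop :=
  ∀ (τ : Inc) (x : FreeIncP K c d), x ∈ ℳ → freeIncPAct K c τ x ∈ ℳ

def oiSpan {ι : Type*} {w : ι → ℕ} (b : ∀ i, FreeOIP K c d (w i)) (n : ℕ) :
    Submodule (POIn K c n) (FreeOIP K c d n) where
  carrier := {y | ∀ T, IsOISubmodule T → (∀ i, b i ∈ T (w i)) → y ∈ T n}
  zero_mem' _ _ _ := zero_mem _
  add_mem' hy hz T hT hb := add_mem (hy T hT hb) (hz T hT hb)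
  smul_mem' a _ hy T hT hb := Submodule.smul_mem _ a (hy T hT hb)

section OISpan

variable {ι : Type*} {w : ι → ℕ} (b : ∀ i, FreeOIP K c d (w i))

theorem isOISubmodule_oiSpan : IsOISubmodule (oiSpan b) :=
  fun _ _ _ _ hz T hT hb => hT _ _ _ _ (hz T hT hb)

theorem mem_oiSpan_self (i : ι) : b i ∈ oiSpan b (w i) :=
  fun _ _ hb => hb i

theorem oiSpan_le {T : ∀ m, Submodule (POIn K c m) (FreeOIP K c d m)} (hT : IsOISubmodule T)
    (hb : ∀ i, b i ∈ T (w i)) (n : ℕ) : oiSpan b n ≤ T n :=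
  fun _ hy => hy T hT hb

end OISpan

/-- The colimit `lim M = ⋃_n κ_n(M_n)` of an OI-submodule `M` of `F`, as a submodule of `ℱ`. -/
def colimSubmodule (M : ∀ m, Submodule (POIn K c m) (FreeOIP K c d m)) (hM : IsOISubmodule M) :
    Submodule (PInf K c) (FreeIncP K c d) where
  carrier := {x | ∃ (n : ℕ) (y : FreeOIP K c d n), y ∈ M n ∧ kappaF K c d n y = x}
  zero_mem' := ⟨0, 0, zero_mem _, kappaF_zero⟩
  add_mem' := by
    rintro _ _ ⟨m, y, hy, rfl⟩ ⟨n, z, hz, rfl⟩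
    refine ⟨max m n, freeOIPmap K c d (oeLE (le_max_left m n)) y +
      freeOIPmap K c d (oeLE (le_max_right m n)) z, add_mem (hM _ _ _ _ hy) (hM _ _ _ _ hz), ?_⟩
    rw [kappaF_add, kappaF_freeOIPmap_oeLE, kappaF_freeOIPmap_oeLE]
  smul_mem' := by
    rintro q _ ⟨n, y, hy, rfl⟩
    obtain ⟨m, a, rfl⟩ := exists_toPInf_eq q
    refine ⟨max m n, POInmap K c (oeLE (le_max_left m n)) a •
      freeOIPmap K c d (oeLE (le_max_right m n)) y, Submodule.smul_mem _ _ (hM _ _ _ _ hy), ?_⟩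
    rw [kappaF_smul, kappaF_freeOIPmap_oeLE, toPInf_POInmap_oeLE]

theorem isIncSubmodule_colimSubmodule {M : ∀ m, Submodule (POIn K c m) (FreeOIP K c d m)}
    (hM : IsOISubmodule M) : IsIncSubmodule (colimSubmodule M hM) := by
  rintro τ _ ⟨n, y, hy, rfl⟩
  exact ⟨incWidth τ n, freeOIPmap K c d (incRestrict τ n) y, hM _ _ _ _ hy,
    kappaF_freeOIPmap (fun _ => rfl) y⟩

noncomputable def kappaSemilinear (n : ℕ) :
    FreeOIP K c d n →ₛₗ[(toPInf K c n : POIn K c n →+* PInf K c)] FreeIncP K c d where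
  toFun := kappaF K c d n
  map_add' := kappaF_add
  map_smul' := kappaF_smul

theorem isOISubmodule_comap_kappa {ℳ : Submodule (PInf K c) (FreeIncP K c d)}
    (hℳ : IsIncSubmodule ℳ) : IsOISubmodule fun m => ℳ.comap (kappaSemilinear (d := d) m) := by
  intro m n ε z hz
  change kappaF K c d n (freeOIPmap K c d ε z) ∈ ℳ
  rw [kappaF_freeOIPmap (incExtend_apply ε)]
  exact hℳ _ _ hz

theorem colimSubmodule_oiSpan_le {ℳ : Submodule (PInf K c) (FreeIncP K c d)}
    (hℳ : IsIncSubmodule ℳ) {ι : Type*} {w : ι → ℕ} {b : ∀ i, FreeOIP K c d (w i)}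
    (hb : ∀ i, kappaF K c d (w i) (b i) ∈ ℳ) :
    colimSubmodule (oiSpan b) (isOISubmodule_oiSpan b) ≤ ℳ := by
  rintro _ ⟨n, y, hy, rfl⟩
  exact oiSpan_le b (isOISubmodule_comap_kappa hℳ) hb n hy

end Submodules

theorem stmt_17_general (K : Type) [CommRing K] (c : ℕ)
    {r : ℕ} (d : Fin r → ℕ)
    -- `ℳ` is an Inc-submodule of `ℱ`
    (ℳ : Submodule (PInf K c) (FreeIncP K c d))
    (hM : ∀ (τ : Inc) (x : FreeIncP K c d), x ∈ ℳ → freeIncPAct K c τ x ∈ ℳ)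
    -- `{g_1, …, g_s}` is a generating set of `ℳ` as an Inc-module
    {s : ℕ} (g : Fin s → FreeIncP K c d)
    (hgmem : ∀ i, g i ∈ ℳ)
    (hgspan : ∀ T : Submodule (PInf K c) (FreeIncP K c d),
      (∀ (τ : Inc) (x : FreeIncP K c d), x ∈ T → freeIncPAct K c τ x ∈ T) →
      (∀ i, g i ∈ T) → ℳ ≤ T)
    -- `b_i ∈ F_{ν(g_i)}` is an element with `κ_{ν(g_i)}(b_i) = g_i`
    (b : ∀ i, FreeOIP K c d (normF K c d (g i)))
    (hb : ∀ i, kappaF K c d (normF K c d (g i)) (b i) = g i) :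
    -- such `b_i` are unique, and `ℳ = lim M` where `M = ⟨b_1, …, b_s⟩` is the
    -- OI-submodule of `F` generated by the `b_i`
    (∀ (i : Fin s) (y : FreeOIP K c d (normF K c d (g i))),
      kappaF K c d (normF K c d (g i)) y = g i → y = b i) ∧
    (∀ x : FreeIncP K c d, x ∈ ℳ ↔
      ∃ (n : ℕ) (y : FreeOIP K c d n),
        (∀ T : ∀ m, Submodule (POIn K c m) (FreeOIP K c d m),
          (∀ (m p : ℕ) (ε : Fin m ↪o Fin p) (z : FreeOIP K c d m),
            z ∈ T m → freeOIPmap K c d ε z ∈ T p) →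
          (∀ i, b i ∈ T (normF K c d (g i))) →
          y ∈ T n) ∧
        kappaF K c d n y = x) := by
  refine ⟨fun i y hy => kappaF_injective _ (hy.trans (hb i).symm), fun x => ?_⟩
  change x ∈ ℳ ↔ x ∈ colimSubmodule (oiSpan b) (isOISubmodule_oiSpan b)
  exact ⟨fun hx => hgspan _ (isIncSubmodule_colimSubmodule _)
      (fun i => ⟨_, b i, mem_oiSpan_self b i, hb i⟩) hx,
    fun hx => colimSubmodule_oiSpan_le hM (fun i => (hb i).symm ▸ hgmem i) hx⟩

/-- Let `K` be a Noetherian commutative ring, `c ≥ 1`, and let `ℳ`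
be an Inc-submodule of a finitely generated free Inc-module `ℱ = ⊕_{i=1}^r F^{Inc,d_i}`
over `𝒫 = K[x_{i,j} : i ∈ [c], j ∈ ℕ]`. Then `ℳ` is the colimit of an OI-module:
writing `ℱ = lim F` with `F = ⊕_{i=1}^r F^{OI,d_i}` over `P^{OI,c}` and
`κ_n : F_n → ℱ` the natural maps, and choosing a finite generating set `g_1, …, g_s`
of `ℳ` with norms `ν(g_i)`, the elements `b_i ∈ F_{ν(g_i)}` with `κ(b_i) = g_i` are
unique, and the OI-submodule `M` of `F` generated by the `b_i` satisfies
`lim M = ℳ`, i.e. `ℳ = ⋃_n κ_n(M_n)`. -/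
theorem stmt_17 (K : Type) [CommRing K] [IsNoetherianRing K] (c : ℕ) (hc : 1 ≤ c)
    {r : ℕ} (d : Fin r → ℕ)
    -- `ℳ` is an Inc-submodule of `ℱ`
    (ℳ : Submodule (PInf K c) (FreeIncP K c d))
    (hM : ∀ (τ : Inc) (x : FreeIncP K c d), x ∈ ℳ → freeIncPAct K c τ x ∈ ℳ)
    -- `{g_1, …, g_s}` is a generating set of `ℳ` as an Inc-module
    {s : ℕ} (g : Fin s → FreeIncP K c d)
    (hgmem : ∀ i, g i ∈ ℳ)
    (hgspan : ∀ T : Submodule (PInf K c) (FreeIncP K c d),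
      (∀ (τ : Inc) (x : FreeIncP K c d), x ∈ T → freeIncPAct K c τ x ∈ T) →
      (∀ i, g i ∈ T) → ℳ ≤ T)
    -- `b_i ∈ F_{ν(g_i)}` is an element with `κ_{ν(g_i)}(b_i) = g_i`
    (b : ∀ i, FreeOIP K c d (normF K c d (g i)))
    (hb : ∀ i, kappaF K c d (normF K c d (g i)) (b i) = g i) :
    -- such `b_i` are unique, and `ℳ = lim M` where `M = ⟨b_1, …, b_s⟩` is the
    -- OI-submodule of `F` generated by the `b_i`
    (∀ (i : Fin s) (y : FreeOIP K c d (normF K c d (g i))),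
      kappaF K c d (normF K c d (g i)) y = g i → y = b i) ∧
    (∀ x : FreeIncP K c d, x ∈ ℳ ↔
      ∃ (n : ℕ) (y : FreeOIP K c d n),
        (∀ T : ∀ m, Submodule (POIn K c m) (FreeOIP K c d m),
          (∀ (m p : ℕ) (ε : Fin m ↪o Fin p) (z : FreeOIP K c d m),
            z ∈ T m → freeOIPmap K c d ε z ∈ T p) →
          (∀ i, b i ∈ T (normF K c d (g i))) →
          y ∈ T n) ∧
        kappaF K c d n y = x) :=
  stmt_17_general K c d ℳ hM g hgmem hgspan b hb
end

section
/- Let K be a Noetherian commutative ring and c ≥ 1. Every Inc-submodule ℳ of a finitely generated free Inc-module over 𝒫 = K[x_{i,j} : i ∈ [c], j ∈ ℕ] admits a free resolution ⋯ → ℱ₂ → ℱ₁ → ℳ → 0 in which each ℱ_i is a free Inc-module over 𝒫 that is finitely generated as an Inc-module and all differentials (and the augmentation) are Inc-equivariant 𝒫-module homomorphisms. Moreover, if ℳ is a graded module (with respect to the standard grading of 𝒫 giving every variable degree one), then such a resolution exists with all differentials of degree zero. -/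
open MvPolynomial

/-- The degree-`j` homogeneous component of an element of a free module over `𝒫`
(taken coefficientwise), for the standard grading in which every variable has
degree one and every basis element `ε_{π,i}` has degree zero. -/
noncomputable def homCompF (K : Type) [CommRing K] (c : ℕ) {ι : Type} (j : ℕ)
    (f : ι →₀ PInf K c) : ι →₀ PInf K c :=
  Finsupp.mapRange (homogeneousComponent j) (map_zero _) f

/-!
Every Inc-stable submodule `M` of `ℱ` is finitely generated as an Inc-module, by elements `g_k`
involving only the columns `< n_k`. Then `ε_π ↦ π · g_k` defines an equivariant surjection
`⊕_k F^{Inc,n_k} → M` whose kernel is again Inc-stable, and iterating gives the resolution. If `M`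
is graded, the graded components of the `g_k` generate it as well; giving `ε_{k,π}` the degree of
`g_k` makes the surjection homogeneous of degree zero and its kernel graded.

Finite generation is a Gröbner-type argument. Terms `x^e ε_π` carry a well-order compatible with
the Inc-action and with multiplication by monomials, and if `t` divides `t'` up to the Inc-action
then the ideal of leading coefficients of `M` at `t` is contained in that at `t'`. By Higman's
lemma, every sequence of terms has a subsequence that is increasing for this divisibility, so a
strictly ascending chain of Inc-stable submodules would produce a strictly ascending chain of
ideals of the Noetherian ring `K`.
-/

theorem Finsupp.toColex_mapDomain_lt_toColex_mapDomain {α β N : Type*} [LinearOrder α]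
    [LinearOrder β] [AddCommMonoid N] [LT N] {φ : α → β} (hφ : StrictMono φ)
    {f g : α →₀ N} (h : toColex f < toColex g) :
    toColex (f.mapDomain φ) < toColex (g.mapDomain φ) := by
  obtain ⟨i, hi, hlt⟩ := Finsupp.Colex.lt_iff.mp h
  refine Finsupp.Colex.lt_iff.mpr ⟨φ i, fun j hj => ?_, ?_⟩
  · by_cases hr : j ∈ Set.range φ
    · obtain ⟨u, rfl⟩ := hr
      simp only [ofColex_toColex, Finsupp.mapDomain_apply hφ.injective]
      exact hi u (hφ.lt_iff_lt.mp hj)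
    · simp only [ofColex_toColex, Finsupp.mapDomain_of_notMem_range _ _ hr]
  · simpa only [ofColex_toColex, Finsupp.mapDomain_apply hφ.injective] using hlt

theorem StrictMono.eq_of_range_subset {α : Type*} [LinearOrder α] {n : ℕ} {f g : Fin n → α}
    (hf : StrictMono f) (hg : StrictMono g) (h : Set.range f ⊆ Set.range g) : f = g := by
  classical
  have hcard : (Finset.univ.image g).card = n := by
    rw [Finset.card_image_of_injective _ hg.injective, Finset.card_univ, Fintype.card_fin]
  have hf_mem x : f x ∈ Finset.univ.image g := by
    obtain ⟨j, hj⟩ := h ⟨x, rfl⟩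
    exact Finset.mem_image.mpr ⟨j, Finset.mem_univ _, hj⟩
  have hg_mem x : g x ∈ Finset.univ.image g := Finset.mem_image_of_mem g (Finset.mem_univ x)
  exact (Finset.orderEmbOfFin_unique hcard hf_mem hf).trans
    (Finset.orderEmbOfFin_unique hcard hg_mem hg).symm

namespace Inc

def extend {n : ℕ} (g : Fin n → ℕ) (hg : StrictMono g) : Inc :=
  ⟨fun j => if h : j < n then g ⟨j, h⟩ else j + Finset.univ.sup g, by
    intro a b hab
    have hle : ∀ (k : ℕ) (hk : k < n), g ⟨k, hk⟩ ≤ Finset.univ.sup g :=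
      fun k hk => Finset.le_sup (Finset.mem_univ _)
    by_cases hb : b < n
    · simp only [dif_pos hb, dif_pos (hab.trans hb)]
      exact hg (Fin.mk_lt_mk.mpr hab)
    · by_cases ha : a < n
      · simp only [dif_pos ha, dif_neg hb]
        have := hle a ha
        omega
      · simp only [dif_neg ha, dif_neg hb]
        omega⟩

theorem extend_apply_of_lt {n : ℕ} (g : Fin n → ℕ) (hg : StrictMono g) {j : ℕ} (h : j < n) :
    (extend g hg).1 j = g ⟨j, h⟩ := dif_pos h

end Inc

theorem List.exists_orderEmbedding_of_sublistForall₂_ofFn {α : Type*} {R : α → α → Prop}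
    {m n : ℕ} {f : Fin m → α} {g : Fin n → α}
    (h : List.SublistForall₂ R (List.ofFn f) (List.ofFn g)) :
    ∃ ψ : Fin m ↪o Fin n, ∀ j, R (f j) (g (ψ j)) := by
  obtain ⟨l, hfl, hlg⟩ := List.sublistForall₂_iff.mp h
  obtain ⟨φ, hφ⟩ := List.sublist_iff_exists_fin_orderEmbedding_get_eq.mp hlg
  have hm : m = l.length := by simpa using hfl.length_eq
  subst hm
  refine ⟨φ.trans (Fin.castOrderIso (List.length_ofFn)).toOrderEmbedding, fun j => ?_⟩
  have hj := (List.forall₂_iff_get.mp hfl).2 j (by simp) j.2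
  rw [show (⟨j, j.2⟩ : Fin l.length) = j from rfl, hφ j] at hj
  simpa [Fin.cast] using hj

theorem wellQuasiOrdered_sublistForall₂ {α : Type*} [Preorder α] [WellQuasiOrderedLE α] :
    WellQuasiOrdered (List.SublistForall₂ (α := α) (· ≤ ·)) := by
  have := Set.PartiallyWellOrderedOn.partiallyWellOrderedOn_sublistForall₂ (· ≤ ·)
    (Set.partiallyWellOrderedOn_univ_iff.mpr (wellQuasiOrdered_le (α := α)))
  simpa only [Set.mem_univ, implies_true, Set.ofPred_true,
    Set.partiallyWellOrderedOn_univ_iff] using this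

theorem MvPolynomial.homogeneousComponent_mul_of_isHomogeneous {σ R : Type*} [CommSemiring R]
    {a p : MvPolynomial σ R} {m : ℕ} (hp : p.IsHomogeneous m) (k : ℕ) :
    homogeneousComponent k (a * p) =
      (if m ≤ k then homogeneousComponent (k - m) a else 0) * p := by
  have hterm i : homogeneousComponent k (homogeneousComponent i a * p) =
      if k = i + m then homogeneousComponent i a * p else 0 :=
    homogeneousComponent_of_mem ((homogeneousComponent_isHomogeneous i a).mul hp)
  conv_lhs => rw [← sum_homogeneousComponent a, Finset.sum_mul, map_sum]
  simp only [hterm]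
  split_ifs with hmk
  · rw [Finset.sum_eq_single (k - m) (fun i _ hi => if_neg (by omega)) fun h => ?_,
      if_pos (by omega)]
    rw [if_pos (by omega), homogeneousComponent_eq_zero _ _ (by simp at h; omega), zero_mul]
  · rw [zero_mul]
    exact Finset.sum_eq_zero fun i _ => if_neg (by omega)

namespace FreeIncP

open Finsupp

variable {K : Type} [CommRing K] {c : ℕ} {r : ℕ} {d : Fin r → ℕ}

abbrev Index (d : Fin r → ℕ) : Type := Σ i : Fin r, OIHomNat (d i)

abbrev Exponent (c : ℕ) : Type := Fin c × ℕ →₀ ℕ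

def varMap (τ : Inc) : Fin c × ℕ → Fin c × ℕ := Prod.map id τ.1

def indexMap (τ : Inc) (b : Index d) : Index d := ⟨b.1, incAct τ b.2⟩

noncomputable def expMap (τ : Inc) (e : Exponent c) : Exponent c := e.mapDomain (varMap τ)

theorem varMap_injective (τ : Inc) : Function.Injective (varMap (c := c) τ) :=
  Function.injective_id.prodMap τ.2.injective

theorem incAct_injective {n : ℕ} (τ : Inc) : Function.Injective (incAct (d := n) τ) :=
  fun _ _ h => Subtype.ext (funext fun j => τ.2.injective (congrFun (congrArg Subtype.val h) j))

theorem indexMap_injective (τ : Inc) : Function.Injective (indexMap (d := d) τ) := by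
  rintro ⟨i, π⟩ ⟨i', π'⟩ h
  obtain ⟨rfl, h⟩ := Sigma.mk.inj_iff.mp h
  exact congrArg (Sigma.mk i) (incAct_injective τ (eq_of_heq h))

theorem indexMap_mul (σ τ : Inc) (b : Index d) :
    indexMap σ (indexMap τ b) = indexMap (σ * τ) b := rfl

theorem incP_eq_rename (τ : Inc) : incP K c τ = rename (varMap τ) := rfl

theorem incP_mul (σ τ : Inc) (a : PInf K c) :
    incP K c σ (incP K c τ a) = incP K c (σ * τ) a := by
  rw [incP_eq_rename, incP_eq_rename, rename_rename]
  rfl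

theorem incP_one (a : PInf K c) : incP K c 1 a = a := by
  rw [incP_eq_rename, show varMap (c := c) 1 = id from rfl, rename_id, AlgHom.id_apply]

theorem act_eq_mapDomain (τ : Inc) (f : FreeIncP K c d) :
    freeIncPAct K c τ f = mapDomain (indexMap τ) (mapRange (incP K c τ) (map_zero _) f) := by
  rw [mapDomain, sum_mapRange_index fun _ => single_zero _]
  rfl

theorem act_apply_indexMap (τ : Inc) (f : FreeIncP K c d) (b : Index d) :
    freeIncPAct K c τ f (indexMap τ b) = incP K c τ (f b) := by
  rw [act_eq_mapDomain, mapDomain_apply (indexMap_injective τ), mapRange_apply]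

theorem act_apply_of_notMem_range (τ : Inc) (f : FreeIncP K c d) {b : Index d}
    (hb : b ∉ Set.range (indexMap τ)) : freeIncPAct K c τ f b = 0 := by
  rw [act_eq_mapDomain, mapDomain_of_notMem_range _ _ hb]

theorem act_single (τ : Inc) (b : Index d) (a : PInf K c) :
    freeIncPAct K c τ (single b a) = single (indexMap τ b) (incP K c τ a) := by
  rw [act_eq_mapDomain, mapRange_single, mapDomain_single]

theorem act_zero (τ : Inc) : freeIncPAct K c τ (0 : FreeIncP K c d) = 0 := by
  simp [act_eq_mapDomain]

theorem act_add (τ : Inc) (f g : FreeIncP K c d) :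
    freeIncPAct K c τ (f + g) = freeIncPAct K c τ f + freeIncPAct K c τ g := by
  simp only [act_eq_mapDomain, mapRange_add (map_add _), mapDomain_add]

theorem act_smul (τ : Inc) (a : PInf K c) (f : FreeIncP K c d) :
    freeIncPAct K c τ (a • f) = incP K c τ a • freeIncPAct K c τ f := by
  simp only [act_eq_mapDomain, ← mapDomain_smul]
  congr 1
  ext b : 1
  simp

theorem act_act (σ τ : Inc) (f : FreeIncP K c d) :
    freeIncPAct K c σ (freeIncPAct K c τ f) = freeIncPAct K c (σ * τ) f := by
  induction f using Finsupp.induction_linear with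
  | zero => simp only [act_zero]
  | add f g hf hg => rw [act_add, act_add, act_add, hf, hg]
  | single b a => rw [act_single, act_single, act_single, indexMap_mul, incP_mul]

theorem act_one (f : FreeIncP K c d) : freeIncPAct K c 1 f = f := by
  induction f using Finsupp.induction_linear with
  | zero => simp only [act_zero]
  | add f g hf hg => rw [act_add, hf, hg]
  | single b a => rw [act_single, incP_one]; rfl

def IncStable (M : Submodule (PInf K c) (FreeIncP K c d)) : Prop :=
  ∀ (τ : Inc) (x : FreeIncP K c d), x ∈ M → freeIncPAct K c τ x ∈ M

noncomputable def incSpan (s : Set (FreeIncP K c d)) : Submodule (PInf K c) (FreeIncP K c d) :=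
  Submodule.span (PInf K c) {y | ∃ τ, ∃ x ∈ s, y = freeIncPAct K c τ x}

theorem subset_incSpan {s : Set (FreeIncP K c d)} : s ⊆ incSpan s :=
  fun x hx => Submodule.subset_span ⟨1, x, hx, (act_one x).symm⟩

theorem incSpan_mono {s t : Set (FreeIncP K c d)} (h : s ⊆ t) : incSpan s ≤ incSpan t :=
  Submodule.span_mono fun _ ⟨τ, x, hx, hy⟩ => ⟨τ, x, h hx, hy⟩

theorem incSpan_le {s : Set (FreeIncP K c d)} {M : Submodule (PInf K c) (FreeIncP K c d)}
    (hM : IncStable M) (hs : s ⊆ M) : incSpan s ≤ M :=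
  Submodule.span_le.mpr fun _ ⟨τ, x, hx, hy⟩ => hy ▸ hM τ x (hs hx)

theorem incStable_incSpan (s : Set (FreeIncP K c d)) : IncStable (incSpan s) := by
  intro τ x hx
  induction hx using Submodule.span_induction with
  | mem y hy =>
    obtain ⟨σ, x, hx, rfl⟩ := hy
    rw [act_act]
    exact Submodule.subset_span ⟨τ * σ, x, hx, rfl⟩
  | zero => rw [act_zero]; exact Submodule.zero_mem _
  | add x y _ _ hx hy => rw [act_add]; exact Submodule.add_mem _ hx hy
  | smul a x _ hx => rw [act_smul]; exact Submodule.smul_mem _ _ hx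

noncomputable def width (x : FreeIncP K c d) : ℕ :=
  x.support.sup fun b => (Finset.univ.sup fun k => b.2.1 k + 1) ⊔ (x b).vars.sup fun v => v.2 + 1

theorem lt_width_of_mem_support {x : FreeIncP K c d} {b : Index d} (hb : b ∈ x.support)
    (k : Fin (d b.1)) : b.2.1 k < width x := by
  unfold width
  exact Nat.lt_of_succ_le <| Finset.le_sup_of_le hb <| le_sup_of_le_left <|
    Finset.le_sup (f := fun k => b.2.1 k + 1) (Finset.mem_univ k)

theorem lt_width_of_mem_vars {x : FreeIncP K c d} {b : Index d} (hb : b ∈ x.support)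
    {v : Fin c × ℕ} (hv : v ∈ (x b).vars) : v.2 < width x := by
  unfold width
  exact Nat.lt_of_succ_le <| Finset.le_sup_of_le hb <| le_sup_of_le_right <|
    Finset.le_sup (f := fun v : Fin c × ℕ => v.2 + 1) hv

theorem act_congr {σ σ' : Inc} {x : FreeIncP K c d} (h : ∀ j < width x, σ.1 j = σ'.1 j) :
    freeIncPAct K c σ x = freeIncPAct K c σ' x := by
  refine Finsupp.sum_congr fun b hb => ?_
  have hidx : incAct σ b.2 = incAct σ' b.2 :=
    Subtype.ext (funext fun k => h _ (lt_width_of_mem_support hb k))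
  have hcoeff : incP K c σ (x b) = incP K c σ' (x b) := by
    rw [incP_eq_rename, incP_eq_rename, rename_eq_aeval, rename_eq_aeval, aeval_def, aeval_def]
    apply eval₂_congr
    intro v e hv he
    show X (v.1, σ.1 v.2) = X (v.1, σ'.1 v.2)
    have hv : v ∈ (x b).vars :=
      (mem_vars_iff_mem_support _).mpr ⟨e, MvPolynomial.mem_support_iff.mpr he, hv⟩
    rw [h _ (lt_width_of_mem_vars hb hv)]
  rw [hidx, hcoeff]

def IsEquivariant {r' : ℕ} {d' : Fin r' → ℕ}
    (φ : FreeIncP K c d' →ₗ[PInf K c] FreeIncP K c d) : Prop :=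
  ∀ (τ : Inc) (x : FreeIncP K c d'), φ (freeIncPAct K c τ x) = freeIncPAct K c τ (φ x)

/-- The map `⊕_k F^{Inc, width (G k)} → ℱ`, `ε_{k,π} ↦ π · G k`; as `G k` only involves the
columns `< width (G k)`, `π · G k` may be computed with any extension of `π` to `Inc`. -/
noncomputable def coverMap {N : ℕ} (G : Fin N → FreeIncP K c d) :
    FreeIncP K c (fun k => width (G k)) →ₗ[PInf K c] FreeIncP K c d :=
  Finsupp.lsum (PInf K c) fun p =>
    LinearMap.toSpanSingleton _ _ (freeIncPAct K c (Inc.extend p.2.1 p.2.2) (G p.1))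

theorem coverMap_single {N : ℕ} (G : Fin N → FreeIncP K c d) (p : Index fun k => width (G k))
    (a : PInf K c) :
    coverMap G (single p a) = a • freeIncPAct K c (Inc.extend p.2.1 p.2.2) (G p.1) := by
  rw [coverMap, lsum_single, LinearMap.toSpanSingleton_apply]

theorem isEquivariant_coverMap {N : ℕ} (G : Fin N → FreeIncP K c d) :
    IsEquivariant (coverMap G) := by
  intro τ x
  induction x using Finsupp.induction_linear with
  | zero => rw [act_zero, map_zero, act_zero]
  | add f g hf hg => rw [act_add, map_add, map_add, act_add, hf, hg]
  | single p a =>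
    rw [act_single, coverMap_single, coverMap_single, act_smul, act_act]
    refine congrArg _ (act_congr fun j hj => ?_)
    rw [Inc.extend_apply_of_lt _ _ hj]
    exact (congrArg τ.1 (Inc.extend_apply_of_lt _ _ hj)).symm

theorem range_coverMap {N : ℕ} (G : Fin N → FreeIncP K c d) :
    LinearMap.range (coverMap G) = incSpan (Set.range G) := by
  refine le_antisymm ?_ (Submodule.span_le.mpr ?_)
  · rintro _ ⟨x, rfl⟩
    rw [coverMap, lsum_apply]
    exact Submodule.sum_mem _ fun p _ =>
      Submodule.smul_mem _ _ (Submodule.subset_span ⟨_, G p.1, ⟨p.1, rfl⟩, rfl⟩)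
  · rintro _ ⟨τ, _, ⟨k, rfl⟩, rfl⟩
    refine ⟨single ⟨k, ⟨fun j => τ.1 j, fun _ _ hab => τ.2 hab⟩⟩ 1, ?_⟩
    rw [coverMap_single, one_smul]
    exact act_congr fun j hj => Inc.extend_apply_of_lt _ _ hj

/-- The degree-`j` component of `x` when each basis element `ε_{i,π}` has degree `W i`. -/
noncomputable def gradedComponent (W : Fin r → ℕ) (j : ℕ) (x : FreeIncP K c d) :
    FreeIncP K c d :=
  onFinset x.support (fun b => if W b.1 ≤ j then homogeneousComponent (j - W b.1) (x b) else 0)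
    fun b hb => mem_support_iff.mpr fun h0 => hb (by rw [h0]; split_ifs <;> simp)

theorem gradedComponent_apply (W : Fin r → ℕ) (j : ℕ) (x : FreeIncP K c d) (b : Index d) :
    gradedComponent W j x b =
      if W b.1 ≤ j then homogeneousComponent (j - W b.1) (x b) else 0 := rfl

theorem gradedComponent_zero (W : Fin r → ℕ) (j : ℕ) :
    gradedComponent W j (0 : FreeIncP K c d) = 0 := by
  ext b : 1
  rw [gradedComponent_apply]
  split_ifs <;> simp

theorem gradedComponent_add (W : Fin r → ℕ) (j : ℕ) (x y : FreeIncP K c d) :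
    gradedComponent W j (x + y) = gradedComponent W j x + gradedComponent W j y := by
  ext b : 1
  simp only [Finsupp.add_apply, gradedComponent_apply]
  split_ifs <;> simp

theorem gradedComponent_single (W : Fin r → ℕ) (j : ℕ) (b : Index d) (a : PInf K c) :
    gradedComponent W j (single b a) =
      single b (if W b.1 ≤ j then homogeneousComponent (j - W b.1) a else 0) := by
  ext b' : 1
  rw [gradedComponent_apply]
  by_cases h : b = b'
  · subst h
    rw [single_eq_same, single_eq_same]
  · rw [single_eq_of_ne' h, single_eq_of_ne' h, map_zero, ite_self]

theorem homCompF_eq_gradedComponent (j : ℕ) (x : FreeIncP K c d) :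
    homCompF K c j x = gradedComponent 0 j x := by
  ext b : 1
  simp [homCompF, gradedComponent_apply]

theorem sum_gradedComponent (W : Fin r → ℕ) (x : FreeIncP K c d) {n : ℕ}
    (hn : x.support.sup (fun b => W b.1 + (x b).totalDegree + 1) ≤ n) :
    ∑ j ∈ Finset.range n, gradedComponent W j x = x := by
  ext b : 1
  rw [Finset.sum_apply']
  simp only [gradedComponent_apply]
  by_cases hb : b ∈ x.support
  · have hle := (Finset.le_sup (f := fun b => W b.1 + (x b).totalDegree + 1) hb).trans hn
    obtain ⟨k, rfl⟩ := Nat.exists_eq_add_of_le (show W b.1 ≤ n by omega)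
    rw [Finset.sum_range_add, Finset.sum_eq_zero fun j hj => if_neg (by simpa using hj), zero_add]
    simp only [le_add_iff_nonneg_right, zero_le, if_true, Nat.add_sub_cancel_left]
    conv_rhs => rw [← sum_homogeneousComponent (x b)]
    exact (Finset.sum_subset (Finset.range_subset_range.mpr (by omega))
      fun i _ hi => homogeneousComponent_eq_zero _ _ (by simp at hi; omega)).symm
  · simp [notMem_support_iff.mp hb]

def IsHomogeneousOfDegree (W : Fin r → ℕ) (D : ℕ) (x : FreeIncP K c d) : Prop :=
  ∀ b, x b = 0 ∨ (W b.1 ≤ D ∧ (x b).IsHomogeneous (D - W b.1))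

theorem isHomogeneousOfDegree_gradedComponent (W : Fin r → ℕ) (j : ℕ) (x : FreeIncP K c d) :
    IsHomogeneousOfDegree W j (gradedComponent W j x) := by
  intro b
  rw [gradedComponent_apply]
  split_ifs with h
  · exact Or.inr ⟨h, homogeneousComponent_isHomogeneous _ _⟩
  · exact Or.inl rfl

theorem IsHomogeneousOfDegree.act {W : Fin r → ℕ} {D : ℕ} {x : FreeIncP K c d}
    (h : IsHomogeneousOfDegree W D x) (τ : Inc) :
    IsHomogeneousOfDegree W D (freeIncPAct K c τ x) := by
  intro b'
  by_cases hb : b' ∈ Set.range (indexMap τ)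
  · obtain ⟨b, rfl⟩ := hb
    rw [act_apply_indexMap, incP_eq_rename]
    rcases h b with h0 | ⟨hle, hhom⟩
    · exact Or.inl (by rw [h0, map_zero])
    · exact Or.inr ⟨hle, hhom.rename_isHomogeneous⟩
  · exact Or.inl (act_apply_of_notMem_range τ x hb)

theorem gradedComponent_smul_of_isHomogeneousOfDegree {W : Fin r → ℕ} {D : ℕ}
    {v : FreeIncP K c d} (hv : IsHomogeneousOfDegree W D v) (j : ℕ) (a : PInf K c) :
    gradedComponent W j (a • v) =
      (if D ≤ j then homogeneousComponent (j - D) a else 0) • v := by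
  ext b : 1
  rw [gradedComponent_apply, Finsupp.smul_apply, Finsupp.smul_apply, smul_eq_mul, smul_eq_mul]
  rcases hv b with h0 | ⟨hle, hhom⟩
  · simp [h0]
  · rw [homogeneousComponent_mul_of_isHomogeneous hhom]
    by_cases hD : D ≤ j
    · rw [if_pos (hle.trans hD), if_pos (by omega), if_pos hD,
        show j - W b.1 - (D - W b.1) = j - D by omega]
    · rw [if_neg hD, zero_mul]
      split_ifs with h h' <;> first | rfl | (exfalso; omega)

theorem coverMap_gradedComponent {N : ℕ} {G : Fin N → FreeIncP K c d} {W : Fin r → ℕ}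
    {D : Fin N → ℕ} (hG : ∀ k, IsHomogeneousOfDegree W (D k) (G k)) (j : ℕ)
    (x : FreeIncP K c fun k => width (G k)) :
    coverMap G (gradedComponent D j x) = gradedComponent W j (coverMap G x) := by
  induction x using Finsupp.induction_linear with
  | zero => rw [gradedComponent_zero, map_zero, gradedComponent_zero]
  | add f g hf hg => rw [gradedComponent_add, map_add, map_add, gradedComponent_add, hf, hg]
  | single p a =>
    rw [gradedComponent_single, coverMap_single, coverMap_single,
      gradedComponent_smul_of_isHomogeneousOfDegree ((hG p.1).act _)]

/-- The term `x^exp ε_idx`. -/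
structure Term (c : ℕ) (d : Fin r → ℕ) where
  idx : Index d
  exp : Exponent c

namespace Term

noncomputable def map (τ : Inc) (t : Term c d) : Term c d :=
  ⟨indexMap τ t.idx, expMap τ t.exp⟩

noncomputable def shift (m : Exponent c) (t : Term c d) : Term c d := ⟨t.idx, t.exp + m⟩

end Term

def lexMap (τ : Inc) (p : Fin c ×ₗ ℕ) : Fin c ×ₗ ℕ :=
  toLex ((ofLex p).1, τ.1 (ofLex p).2)

theorem lexMap_strictMono (τ : Inc) : StrictMono (lexMap (c := c) τ) := by
  intro p q h
  rcases Prod.Lex.lt_iff.mp h with h | ⟨h, h'⟩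
  · exact Prod.Lex.lt_iff.mpr (Or.inl h)
  · exact Prod.Lex.lt_iff.mpr (Or.inr ⟨h, τ.2 h'⟩)

noncomputable def expKey (e : Exponent c) : Colex (Fin c ×ₗ ℕ →₀ ℕ) :=
  toColex (e.mapDomain toLex)

theorem expKey_injective : Function.Injective (expKey (c := c)) :=
  fun _ _ h => mapDomain_injective toLex.injective (toColex.injective h)

theorem expKey_add (e m : Exponent c) : expKey (e + m) = expKey e + expKey m := by
  rw [expKey, mapDomain_add]
  rfl

theorem expKey_expMap_lt (τ : Inc) {e e' : Exponent c} (h : expKey e < expKey e') :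
    expKey (expMap τ e) < expKey (expMap τ e') := by
  have hcomm : toLex ∘ varMap τ = lexMap (c := c) τ ∘ toLex := rfl
  simp only [expKey, expMap, ← mapDomain_comp, hcomm] at h ⊢
  rw [mapDomain_comp, mapDomain_comp]
  exact toColex_mapDomain_lt_toColex_mapDomain (lexMap_strictMono τ) h

/-- The basis element `ε_π` is ordered like the monomial `∏_j y_{π(j)}`. -/
noncomputable def rangeIndicator {n : ℕ} (π : OIHomNat n) : ℕ →₀ ℕ :=
  ∑ j, single (π.1 j) 1

theorem rangeIndicator_incAct {n : ℕ} (τ : Inc) (π : OIHomNat n) :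
    rangeIndicator (incAct τ π) = (rangeIndicator π).mapDomain τ.1 := by
  simp only [rangeIndicator, mapDomain_finsetSum, mapDomain_single]
  rfl

theorem rangeIndicator_ne_zero_iff {n : ℕ} (π : OIHomNat n) (v : ℕ) :
    rangeIndicator π v ≠ 0 ↔ v ∈ Set.range π.1 := by
  classical
  simp [rangeIndicator, Finsupp.finsetSum_apply, Finsupp.single_apply, Finset.filter_eq_empty_iff]

theorem rangeIndicator_injective {n : ℕ} : Function.Injective (rangeIndicator (n := n)) := by
  intro π π' h
  refine Subtype.ext (π.2.eq_of_range_subset π'.2 fun v hv => ?_)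
  rw [← rangeIndicator_ne_zero_iff, ← h, rangeIndicator_ne_zero_iff]
  exact hv

/-- Terms are compared by their monomial first; the resulting order is preserved by the
Inc-action and by multiplication with monomials. -/
noncomputable def termKey (t : Term c d) :
    Lex (Colex (Fin c ×ₗ ℕ →₀ ℕ) × Lex (Fin r × Colex (ℕ →₀ ℕ))) :=
  toLex (expKey t.exp, toLex (t.idx.1, toColex (rangeIndicator t.idx.2)))

theorem termKey_injective : Function.Injective (termKey (c := c) (d := d)) := by
  rintro ⟨⟨i, π⟩, e⟩ ⟨⟨i', π'⟩, e'⟩ h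
  simp only [termKey, toLex_inj, Prod.mk.injEq, toColex_inj] at h
  obtain ⟨he, rfl, hπ⟩ := h
  rw [expKey_injective he, rangeIndicator_injective hπ]

noncomputable instance : LinearOrder (Term c d) := LinearOrder.lift' termKey termKey_injective

instance : WellFoundedLT (Term c d) := ⟨InvImage.wf termKey wellFounded_lt⟩

theorem Term.map_strictMono (τ : Inc) : StrictMono (Term.map (c := c) (d := d) τ) := by
  rintro ⟨⟨i, π⟩, e⟩ ⟨⟨i', π'⟩, e'⟩ h
  change termKey _ < termKey _ at h ⊢
  simp only [termKey, Term.map, indexMap, rangeIndicator_incAct, Prod.Lex.toLex_lt_toLex] at h ⊢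
  rcases h with h | ⟨he, h | ⟨rfl, h⟩⟩
  · exact Or.inl (expKey_expMap_lt τ h)
  · rw [expKey_injective he]
    exact Or.inr ⟨rfl, Or.inl h⟩
  · rw [expKey_injective he]
    exact Or.inr ⟨rfl, Or.inr ⟨rfl, toColex_mapDomain_lt_toColex_mapDomain τ.2 h⟩⟩

theorem Term.shift_strictMono (m : Exponent c) : StrictMono (Term.shift (d := d) m) := by
  rintro ⟨b, e⟩ ⟨b', e'⟩ h
  change termKey _ < termKey _ at h ⊢
  simp only [termKey, Term.shift, expKey_add, Prod.Lex.toLex_lt_toLex] at h ⊢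
  rcases h with h | ⟨he, h⟩
  · exact Or.inl (add_lt_add_left h _)
  · exact Or.inr ⟨by rw [he], h⟩

noncomputable def termCoeff (f : FreeIncP K c d) (t : Term c d) : K := coeff t.exp (f t.idx)

theorem termCoeff_zero (t : Term c d) : termCoeff (0 : FreeIncP K c d) t = 0 :=
  coeff_zero _

theorem termCoeff_add (f g : FreeIncP K c d) (t : Term c d) :
    termCoeff (f + g) t = termCoeff f t + termCoeff g t := coeff_add _ _ _

theorem termCoeff_sub (f g : FreeIncP K c d) (t : Term c d) :
    termCoeff (f - g) t = termCoeff f t - termCoeff g t := by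
  rw [termCoeff, Finsupp.sub_apply, coeff_sub]; rfl

theorem termCoeff_C_smul (k : K) (f : FreeIncP K c d) (t : Term c d) :
    termCoeff ((C k : PInf K c) • f) t = k * termCoeff f t := coeff_C_mul _ _ _

theorem termCoeff_monomial_smul (m : Exponent c) (f : FreeIncP K c d) (t : Term c d) :
    termCoeff ((monomial m 1 : PInf K c) • f) t =
      if m ≤ t.exp then termCoeff f ⟨t.idx, t.exp - m⟩ else 0 := by
  rw [termCoeff, Finsupp.smul_apply, smul_eq_mul, mul_comm, coeff_mul_monomial', mul_one]
  rfl

theorem termCoeff_act (τ : Inc) (f : FreeIncP K c d) (t : Term c d) :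
    termCoeff (freeIncPAct K c τ f) (t.map τ) = termCoeff f t := by
  rw [termCoeff, Term.map, act_apply_indexMap, incP_eq_rename, expMap,
    coeff_rename_mapDomain _ (varMap_injective τ)]
  rfl

theorem termCoeff_act_of_notMem_range (τ : Inc) (f : FreeIncP K c d) {s : Term c d}
    (hs : s ∉ Set.range (Term.map τ)) : termCoeff (freeIncPAct K c τ f) s = 0 := by
  by_cases hb : s.idx ∈ Set.range (indexMap τ)
  · obtain ⟨b, hb⟩ := hb
    rw [termCoeff, ← hb, act_apply_indexMap, incP_eq_rename]
    refine coeff_rename_eq_zero _ _ _ fun e he => absurd ⟨⟨b, e⟩, ?_⟩ hs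
    rw [Term.map, hb, expMap, he]
  · rw [termCoeff, act_apply_of_notMem_range τ f hb, coeff_zero]

theorem finite_setOf_termCoeff_ne_zero (f : FreeIncP K c d) :
    {t : Term c d | termCoeff f t ≠ 0}.Finite := by
  refine (f.support.finite_toSet.biUnion fun b _ =>
    (f b).support.finite_toSet.image (Term.mk b)).subset fun t ht => ?_
  have hb : f t.idx ≠ 0 := fun h => ht (by rw [termCoeff, h, coeff_zero])
  exact Set.mem_biUnion (Finsupp.mem_support_iff.mpr hb)
    ⟨t.exp, MvPolynomial.mem_support_iff.mpr ht, rfl⟩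

def TermsLE (t : Term c d) (f : FreeIncP K c d) : Prop :=
  ∀ s, t < s → termCoeff f s = 0

theorem exists_termsLE_termCoeff_ne_zero {f : FreeIncP K c d} (hf : f ≠ 0) :
    ∃ t, termCoeff f t ≠ 0 ∧ TermsLE t f := by
  obtain ⟨b, hb⟩ := ne_iff.mp hf
  obtain ⟨e, he⟩ := ne_zero_iff.mp hb
  obtain ⟨t, ht, hmax⟩ := Set.exists_max_image _ id (finite_setOf_termCoeff_ne_zero f)
    ⟨⟨b, e⟩, show termCoeff f ⟨b, e⟩ ≠ 0 from he⟩
  exact ⟨t, ht, fun s hts => by_contra fun hs => not_lt_of_ge (hmax s hs) hts⟩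

namespace TermsLE

variable {t : Term c d} {f g : FreeIncP K c d}

theorem sub (hf : TermsLE t f) (hg : TermsLE t g) : TermsLE t (f - g) := fun s hs => by
  rw [termCoeff_sub, hf s hs, hg s hs, sub_zero]

theorem add (hf : TermsLE t f) (hg : TermsLE t g) : TermsLE t (f + g) := fun s hs => by
  rw [termCoeff_add, hf s hs, hg s hs, add_zero]

theorem C_smul (hf : TermsLE t f) (k : K) : TermsLE t ((C k : PInf K c) • f) := fun s hs => by
  rw [termCoeff_C_smul, hf s hs, mul_zero]

theorem monomial_smul (hf : TermsLE t f) (m : Exponent c) :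
    TermsLE (t.shift m) ((monomial m 1 : PInf K c) • f) := by
  intro s hs
  rw [termCoeff_monomial_smul]
  split_ifs with hm
  · refine hf _ ((Term.shift_strictMono m).lt_iff_lt.mp ?_)
    simpa only [Term.shift, tsub_add_cancel_of_le hm] using hs
  · rfl

theorem act (hf : TermsLE t f) (τ : Inc) : TermsLE (t.map τ) (freeIncPAct K c τ f) := by
  intro s hs
  by_cases hr : s ∈ Set.range (Term.map τ)
  · obtain ⟨s, rfl⟩ := hr
    rw [termCoeff_act, hf s ((Term.map_strictMono τ).lt_iff_lt.mp hs)]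
  · exact termCoeff_act_of_notMem_range τ f hr

end TermsLE

def leadingIdeal (M : Submodule (PInf K c) (FreeIncP K c d)) (t : Term c d) : Ideal K where
  carrier := {a | ∃ x ∈ M, TermsLE t x ∧ termCoeff x t = a}
  zero_mem' := ⟨0, M.zero_mem, fun s _ => termCoeff_zero s, termCoeff_zero t⟩
  add_mem' := by
    rintro _ _ ⟨x, hx, hxt, rfl⟩ ⟨y, hy, hyt, rfl⟩
    exact ⟨x + y, M.add_mem hx hy, hxt.add hyt, termCoeff_add x y t⟩
  smul_mem' := by
    rintro k _ ⟨x, hx, hxt, rfl⟩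
    exact ⟨(C k : PInf K c) • x, M.smul_mem _ hx, hxt.C_smul k, termCoeff_C_smul k x t⟩

theorem leadingIdeal_mono {M N : Submodule (PInf K c) (FreeIncP K c d)} (h : M ≤ N)
    (t : Term c d) : leadingIdeal M t ≤ leadingIdeal N t := by
  rintro _ ⟨x, hx, hxt, rfl⟩
  exact ⟨x, h hx, hxt, rfl⟩

/-- Reduce an element of `N` by an element of `M` with the same leading coefficient, and induct
on the leading term. -/
theorem eq_of_leadingIdeal_eq {M N : Submodule (PInf K c) (FreeIncP K c d)} (hMN : M ≤ N)
    (h : ∀ t, leadingIdeal M t = leadingIdeal N t) : M = N := by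
  suffices key : ∀ t, ∀ y ∈ N, TermsLE t y → y ∈ M by
    refine le_antisymm hMN fun y hy => ?_
    by_cases hy0 : y = 0
    · exact hy0 ▸ M.zero_mem
    obtain ⟨t, -, hyt⟩ := exists_termsLE_termCoeff_ne_zero hy0
    exact key t y hy hyt
  intro t
  induction t using WellFoundedLT.induction with
  | _ t IH =>
  intro y hy hyt
  obtain ⟨x, hxM, hxt, hcoeff⟩ : termCoeff y t ∈ leadingIdeal M t :=
    (h t).symm ▸ ⟨y, hy, hyt, rfl⟩
  have hz := hyt.sub hxt
  rw [← sub_add_cancel y x]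
  refine M.add_mem ?_ hxM
  by_cases hz0 : y - x = 0
  · exact hz0 ▸ M.zero_mem
  obtain ⟨s, hs, hzs⟩ := exists_termsLE_termCoeff_ne_zero hz0
  have hst : s < t := by
    refine lt_of_le_of_ne (not_lt.mp fun h => hs (hz s h)) ?_
    rintro rfl
    exact hs (by rw [termCoeff_sub, hcoeff, sub_self])
  exact IH s hst (y - x) (N.sub_mem hy (hMN hxM)) hzs

def IncDvd (t t' : Term c d) : Prop :=
  ∃ τ : Inc, indexMap τ t.idx = t'.idx ∧ ∀ v, t.exp v ≤ t'.exp (varMap τ v)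

theorem IncDvd.refl (t : Term c d) : IncDvd t t := ⟨1, rfl, fun _ => le_rfl⟩

theorem IncDvd.trans {t t' t'' : Term c d} (h : IncDvd t t') (h' : IncDvd t' t'') :
    IncDvd t t'' := by
  obtain ⟨τ, hb, he⟩ := h
  obtain ⟨σ, hb', he'⟩ := h'
  exact ⟨σ * τ, by rw [← indexMap_mul, hb, hb'], fun v => (he v).trans (he' _)⟩

instance : IsPreorder (Term c d) IncDvd where
  refl := IncDvd.refl
  trans _ _ _ := IncDvd.trans

theorem expMap_le_of_forall_le {τ : Inc} {e e' : Exponent c}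
    (h : ∀ v, e v ≤ e' (varMap τ v)) : expMap τ e ≤ e' := by
  intro w
  by_cases hw : w ∈ Set.range (varMap τ)
  · obtain ⟨v, rfl⟩ := hw
    rw [expMap, mapDomain_apply (varMap_injective τ)]
    exact h v
  · rw [expMap, mapDomain_of_notMem_range _ _ hw]
    exact Nat.zero_le _

noncomputable def termBound (t : Term c d) : ℕ :=
  (t.exp.support.sup fun v => v.2 + 1) ⊔ Finset.univ.sup fun k => t.idx.2.1 k + 1

theorem exp_eq_zero_of_termBound_le {t : Term c d} {i : Fin c} {j : ℕ} (h : termBound t ≤ j) :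
    t.exp (i, j) = 0 := by
  by_contra h0
  have := le_sup_of_le_left (b := Finset.univ.sup fun k => t.idx.2.1 k + 1)
    (Finset.le_sup (f := fun v : Fin c × ℕ => v.2 + 1) (mem_support_iff.mpr h0))
  exact absurd (this.trans h) (by simp)

theorem lt_termBound (t : Term c d) (k : Fin (d t.idx.1)) : t.idx.2.1 k < termBound t :=
  Nat.lt_of_succ_le <| le_sup_of_le_right <|
    Finset.le_sup (f := fun k => t.idx.2.1 k + 1) (Finset.mem_univ k)

/-- Column `j` of a term: the exponents of `x_{·,j}`, and whether `j` lies in the image of `π`. -/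
noncomputable def column (t : Term c d) (j : ℕ) : (Fin c → ℕ) × Bool :=
  (fun i => t.exp (i, j), decide (j ∈ Set.range t.idx.2.1))

noncomputable def encode (t : Term c d) : List ((Fin c → ℕ) × Bool) :=
  List.ofFn fun j : Fin (termBound t) => column t j

theorem incDvd_of_sublistForall₂ {t t' : Term c d} (hi : t.idx.1 = t'.idx.1)
    (h : List.SublistForall₂ (· ≤ ·) (encode t) (encode t')) : IncDvd t t' := by
  obtain ⟨ψ, hψ⟩ := List.exists_orderEmbedding_of_sublistForall₂_ofFn h
  set τ := Inc.extend (fun j => (ψ j : ℕ)) fun _ _ hab => ψ.strictMono hab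
  have hτ j (hj : j < termBound t) : τ.1 j = ψ ⟨j, hj⟩ := Inc.extend_apply_of_lt _ _ hj
  refine ⟨τ, ?_, fun ⟨i, j⟩ => ?_⟩
  · obtain ⟨⟨i, π⟩, e⟩ := t
    obtain ⟨⟨i', π'⟩, e'⟩ := t'
    obtain rfl : i = i' := hi
    refine congrArg (Sigma.mk i) (Subtype.ext ((τ.2.comp π.2).eq_of_range_subset π'.2 ?_))
    rintro _ ⟨k, rfl⟩
    have hk := lt_termBound ⟨⟨i, π⟩, e⟩ k
    have hmark := (hψ ⟨_, hk⟩).2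
    simp only [column, Set.mem_range, exists_apply_eq_apply, decide_true] at hmark
    obtain ⟨k', hk'⟩ := of_decide_eq_true (top_le_iff.mp hmark)
    exact ⟨k', hk'.trans (hτ _ hk).symm⟩
  · by_cases hj : j < termBound t
    · simpa [varMap, hτ j hj, column] using (hψ ⟨j, hj⟩).1 i
    · rw [exp_eq_zero_of_termBound_le (not_lt.mp hj)]
      exact Nat.zero_le _

/-- Higman's lemma, transported to terms through `encode`. -/
theorem wellQuasiOrdered_incDvd : WellQuasiOrdered (IncDvd (c := c) (d := d)) := by
  intro f
  obtain ⟨m, n, hmn, hi, hl⟩ := (Finite.wellQuasiOrdered (α := Fin r) (· = ·)).prod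
    wellQuasiOrdered_sublistForall₂ fun k => ((f k).idx.1, encode (f k))
  exact ⟨m, n, hmn, incDvd_of_sublistForall₂ hi hl⟩

theorem leadingIdeal_le_of_incDvd {M : Submodule (PInf K c) (FreeIncP K c d)}
    (hM : IncStable M) {t t' : Term c d} (h : IncDvd t t') :
    leadingIdeal M t ≤ leadingIdeal M t' := by
  rintro _ ⟨x, hx, hxt, rfl⟩
  obtain ⟨τ, hb, he⟩ := h
  have hle := expMap_le_of_forall_le he
  set m := t'.exp - expMap τ t.exp
  have ht' : (t.map τ).shift m = t' := by
    rw [Term.map, Term.shift, hb, add_tsub_cancel_of_le hle]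
  refine ⟨(monomial m 1 : PInf K c) • freeIncPAct K c τ x, M.smul_mem _ (hM τ x hx),
    ht' ▸ (hxt.act τ).monomial_smul m, ?_⟩
  rw [← ht', termCoeff_monomial_smul]
  simp only [Term.shift, le_add_self, if_true, add_tsub_cancel_right]
  exact termCoeff_act τ x t

section Noetherian

variable [IsNoetherianRing K]

/-- Ascending chains of Inc-stable submodules are stationary: along a subsequence on which the
witnessing terms form an `IncDvd`-chain, the leading ideals would form a strictly ascending
chain of ideals of the Noetherian ring `K`. -/
theorem wellFounded_incStable :
    WellFounded fun N N' : Submodule (PInf K c) (FreeIncP K c d) => IncStable N ∧ N' < N := by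
  rw [wellFounded_iff_isEmpty_descending_chain]
  refine ⟨fun ⟨M, hM⟩ => ?_⟩
  set N := fun n => M (n + 1)
  have hN n : IncStable (N n) := (hM n).1
  have hmono : Monotone N := monotone_nat_of_le_succ fun n => (hM (n + 1)).2.le
  have hex n : ∃ t, ¬ leadingIdeal (N (n + 1)) t ≤ leadingIdeal (N n) t := by
    by_contra! h
    exact (hM (n + 1)).2.ne (eq_of_leadingIdeal_eq (hM (n + 1)).2.le
      fun t => le_antisymm (leadingIdeal_mono (hM (n + 1)).2.le t) (h t))
  choose t ht using hex
  obtain ⟨g, hg⟩ := wellQuasiOrdered_incDvd.exists_monotone_subseq t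
  let J : ℕ →o Ideal K := ⟨fun k => leadingIdeal (N (g k)) (t (g k)), fun m n hmn =>
    (leadingIdeal_mono (hmono (g.monotone hmn)) _).trans
      (leadingIdeal_le_of_incDvd (hN _) (hg m n hmn))⟩
  obtain ⟨n, hn⟩ := monotone_stabilizes_iff_noetherian.mpr inferInstance J
  apply ht (g n)
  calc leadingIdeal (N (g n + 1)) (t (g n))
      ≤ leadingIdeal (N (g (n + 1))) (t (g n)) :=
        leadingIdeal_mono (hmono (g.strictMono n.lt_succ_self)) _
    _ ≤ J (n + 1) := leadingIdeal_le_of_incDvd (hN _) (hg n (n + 1) n.le_succ)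
    _ = J n := (hn (n + 1) n.le_succ).symm

theorem exists_finset_incSpan_eq {M : Submodule (PInf K c) (FreeIncP K c d)} (hM : IncStable M) :
    ∃ s : Finset (FreeIncP K c d), ↑s ⊆ (M : Set (FreeIncP K c d)) ∧ incSpan ↑s = M := by
  classical
  obtain ⟨_, ⟨s, hsM, rfl⟩, hmin⟩ := wellFounded_incStable.has_min
    {N | ∃ s : Finset (FreeIncP K c d), ↑s ⊆ (M : Set (FreeIncP K c d)) ∧ incSpan ↑s = N}
    ⟨incSpan ((∅ : Finset (FreeIncP K c d)) : Set (FreeIncP K c d)), ∅, by simp, rfl⟩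
  refine ⟨s, hsM, le_antisymm (incSpan_le hM hsM) fun x hx => by_contra fun hxs => ?_⟩
  refine hmin _ ⟨insert x s, ?_, rfl⟩ ⟨incStable_incSpan _, lt_of_le_of_ne ?_ fun h => ?_⟩
  · simpa [Set.insert_subset_iff] using ⟨hx, hsM⟩
  · exact incSpan_mono (by simp)
  · exact hxs (h ▸ subset_incSpan (by simp))

theorem exists_generators {M : Submodule (PInf K c) (FreeIncP K c d)} (hM : IncStable M) :
    ∃ (N : ℕ) (G : Fin N → FreeIncP K c d), incSpan (Set.range G) = M := by
  obtain ⟨s, -, hs⟩ := exists_finset_incSpan_eq hM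
  obtain ⟨N, G, -, hG⟩ := s.finite_toSet.fin_param
  exact ⟨N, G, hG ▸ hs⟩

/-- Take the graded components of a finite generating set. -/
theorem exists_homogeneous_generators {W : Fin r → ℕ}
    {M : Submodule (PInf K c) (FreeIncP K c d)} (hM : IncStable M)
    (hgr : ∀ x ∈ M, ∀ j, gradedComponent W j x ∈ M) :
    ∃ (N : ℕ) (G : Fin N → FreeIncP K c d) (D : Fin N → ℕ),
      incSpan (Set.range G) = M ∧ ∀ k, IsHomogeneousOfDegree W (D k) (G k) := by
  classical
  obtain ⟨s, hsM, hs⟩ := exists_finset_incSpan_eq hM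
  set bound : FreeIncP K c d → ℕ :=
    fun g => g.support.sup fun b => W b.1 + (g b).totalDegree + 1
  obtain ⟨N, p, -, hp⟩ := (s ×ˢ Finset.range (s.sup bound)).finite_toSet.fin_param
  refine ⟨N, fun k => gradedComponent W (p k).2 (p k).1, fun k => (p k).2, le_antisymm ?_ ?_,
    fun k => isHomogeneousOfDegree_gradedComponent _ _ _⟩
  · refine incSpan_le hM ?_
    rintro _ ⟨k, rfl⟩
    have hk : p k ∈ s ×ˢ Finset.range (s.sup bound) := by
      rw [← Finset.mem_coe, ← hp]
      exact ⟨k, rfl⟩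
    exact hgr _ (hsM (Finset.mem_product.mp hk).1) _
  · rw [← hs]
    refine incSpan_le (incStable_incSpan _) fun g hg => ?_
    rw [← sum_gradedComponent W g (Finset.le_sup (f := bound) hg)]
    refine Submodule.sum_mem _ fun j hj => subset_incSpan ?_
    obtain ⟨k, hk⟩ : (g, j) ∈ Set.range p := by
      rw [hp]
      exact Finset.mem_product.mpr ⟨hg, hj⟩
    exact ⟨k, by simp only [hk]⟩

end Noetherian

/-- A stage of the resolution: an Inc-stable submodule of `⊕_i F^{Inc, deg i}`, in which the
basis elements `ε_{i,π}` have degree `wt i`. -/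
structure Stage (K : Type) [CommRing K] (c : ℕ) where
  rank : ℕ
  deg : Fin rank → ℕ
  wt : Fin rank → ℕ
  M : Submodule (PInf K c) (FreeIncP K c deg)
  stable : IncStable M

namespace Stage

def IsGraded (P : Stage K c) : Prop := ∀ x ∈ P.M, ∀ j, gradedComponent P.wt j x ∈ P.M

variable [IsNoetherianRing K] (P : Stage K c)

theorem exists_generators : ∃ (N : ℕ) (G : Fin N → FreeIncP K c P.deg) (D : Fin N → ℕ),
    incSpan (Set.range G) = P.M ∧
      (P.IsGraded → ∀ k, IsHomogeneousOfDegree P.wt (D k) (G k)) := by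
  by_cases hP : P.IsGraded
  · obtain ⟨N, G, D, hG, hD⟩ := exists_homogeneous_generators P.stable hP
    exact ⟨N, G, D, hG, fun _ => hD⟩
  · obtain ⟨N, G, hG⟩ := FreeIncP.exists_generators P.stable
    exact ⟨N, G, 0, hG, fun h => absurd h hP⟩

noncomputable def numGenerators : ℕ := P.exists_generators.choose

noncomputable def generators : Fin P.numGenerators → FreeIncP K c P.deg :=
  P.exists_generators.choose_spec.choose

noncomputable def generatorDegree : Fin P.numGenerators → ℕ :=
  P.exists_generators.choose_spec.choose_spec.choose

theorem incSpan_generators : incSpan (Set.range P.generators) = P.M :=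
  P.exists_generators.choose_spec.choose_spec.choose_spec.1

theorem IsGraded.isHomogeneousOfDegree_generators {P : Stage K c} (hP : P.IsGraded)
    (k : Fin P.numGenerators) :
    IsHomogeneousOfDegree P.wt (P.generatorDegree k) (P.generators k) :=
  P.exists_generators.choose_spec.choose_spec.choose_spec.2 hP k

noncomputable def cover :
    FreeIncP K c (fun k => width (P.generators k)) →ₗ[PInf K c] FreeIncP K c P.deg :=
  coverMap P.generators

theorem isEquivariant_cover : IsEquivariant P.cover := isEquivariant_coverMap _

theorem range_cover : LinearMap.range P.cover = P.M :=
  (range_coverMap _).trans P.incSpan_generators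

noncomputable def next : Stage K c where
  rank := P.numGenerators
  deg k := width (P.generators k)
  wt := P.generatorDegree
  M := LinearMap.ker P.cover
  stable τ x hx := by
    rw [LinearMap.mem_ker] at hx ⊢
    rw [P.isEquivariant_cover, hx, act_zero]

variable {P}

theorem IsGraded.cover_gradedComponent (hP : P.IsGraded) (j : ℕ)
    (x : FreeIncP K c fun k => width (P.generators k)) :
    P.cover (gradedComponent P.generatorDegree j x) = gradedComponent P.wt j (P.cover x) :=
  coverMap_gradedComponent hP.isHomogeneousOfDegree_generators j x

theorem IsGraded.next (hP : P.IsGraded) : P.next.IsGraded := fun x hx j =>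
  (hP.cover_gradedComponent j x).trans ((congrArg _ hx).trans (gradedComponent_zero _ _))

theorem IsGraded.isHomogeneousOfDegree_cover_single (hP : P.IsGraded)
    (p : Index fun k => width (P.generators k)) :
    IsHomogeneousOfDegree P.wt (P.generatorDegree p.1) (P.cover (single p 1)) := by
  rw [cover, coverMap_single, one_smul]
  exact (hP.isHomogeneousOfDegree_generators p.1).act _

variable (P) in
noncomputable def resolution : ℕ → Stage K c
  | 0 => P
  | n + 1 => (resolution n).next

theorem IsGraded.resolution (hP : P.IsGraded) : ∀ n, (P.resolution n).IsGraded
  | 0 => hP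
  | n + 1 => (hP.resolution n).next

end Stage

end FreeIncP

theorem stmt_18_general (K : Type) [CommRing K] [IsNoetherianRing K] (c : ℕ)
    {r : ℕ} (d : Fin r → ℕ)
    (ℳ : Submodule (PInf K c) (FreeIncP K c d))
    (hM : ∀ (τ : Inc) (x : FreeIncP K c d), x ∈ ℳ → freeIncPAct K c τ x ∈ ℳ) :
    -- an Inc-equivariant free resolution `⋯ → ℱ₂ → ℱ₁ → ℳ → 0` exists
    (∃ (rk : ℕ → ℕ) (dd : ∀ i, Fin (rk i) → ℕ)
      (δ : ∀ i, FreeIncP K c (dd (i + 1)) →ₗ[PInf K c] FreeIncP K c (dd i))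
      (ε : FreeIncP K c (dd 0) →ₗ[PInf K c] FreeIncP K c d),
      -- the differentials and the augmentation are Inc-equivariant
      (∀ (i : ℕ) (τ : Inc) (x : FreeIncP K c (dd (i + 1))),
        δ i (freeIncPAct K c τ x) = freeIncPAct K c τ (δ i x)) ∧
      (∀ (τ : Inc) (x : FreeIncP K c (dd 0)),
        ε (freeIncPAct K c τ x) = freeIncPAct K c τ (ε x)) ∧
      -- exactness: `ℱ₁ → ℳ → 0` and `range = ker` at every step
      LinearMap.range ε = ℳ ∧
      LinearMap.range (δ 0) = LinearMap.ker ε ∧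
      (∀ i, LinearMap.range (δ (i + 1)) = LinearMap.ker (δ i))) ∧
    -- moreover, if `ℳ` is a graded submodule, the resolution can be chosen graded
    -- with degree-zero differentials
    ((∀ x ∈ ℳ, ∀ j : ℕ, homCompF K c j x ∈ ℳ) →
      ∃ (rk : ℕ → ℕ) (dd : ∀ i, Fin (rk i) → ℕ)
        (δ : ∀ i, FreeIncP K c (dd (i + 1)) →ₗ[PInf K c] FreeIncP K c (dd i))
        (ε : FreeIncP K c (dd 0) →ₗ[PInf K c] FreeIncP K c d)
        -- degrees of the basis elements of the free modules in the resolution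
        (t : ∀ i, (Σ j : Fin (rk i), OIHomNat (dd i j)) → ℕ),
        (∀ (i : ℕ) (τ : Inc) (x : FreeIncP K c (dd (i + 1))),
          δ i (freeIncPAct K c τ x) = freeIncPAct K c τ (δ i x)) ∧
        (∀ (τ : Inc) (x : FreeIncP K c (dd 0)),
          ε (freeIncPAct K c τ x) = freeIncPAct K c τ (ε x)) ∧
        LinearMap.range ε = ℳ ∧
        LinearMap.range (δ 0) = LinearMap.ker ε ∧
        (∀ i, LinearMap.range (δ (i + 1)) = LinearMap.ker (δ i)) ∧
        -- the augmentation has degree zero: the image of a basis element of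
        -- degree `t 0 p` is homogeneous of degree `t 0 p`
        (∀ (p : Σ j : Fin (rk 0), OIHomNat (dd 0 j))
            (q : Σ i : Fin r, OIHomNat (d i)),
          ((ε (Finsupp.single p 1)) q).IsHomogeneous (t 0 p)) ∧
        -- the differentials have degree zero
        (∀ (i : ℕ) (p : Σ j : Fin (rk (i + 1)), OIHomNat (dd (i + 1) j))
            (q : Σ j : Fin (rk i), OIHomNat (dd i j)),
          ((δ i (Finsupp.single p 1)) q = 0) ∨
          (t i q ≤ t (i + 1) p ∧
            ((δ i (Finsupp.single p 1)) q).IsHomogeneous (t (i + 1) p - t i q)))) := by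
  let P : FreeIncP.Stage K c := ⟨r, d, 0, ℳ, hM⟩
  refine ⟨⟨fun i => (P.resolution (i + 1)).rank, fun i => (P.resolution (i + 1)).deg,
    fun i => (P.resolution (i + 1)).cover, P.cover,
    fun i => (P.resolution (i + 1)).isEquivariant_cover, P.isEquivariant_cover, P.range_cover,
    (P.resolution 1).range_cover, fun i => (P.resolution (i + 2)).range_cover⟩, fun hgr => ?_⟩
  have hP : P.IsGraded := fun x hx j => FreeIncP.homCompF_eq_gradedComponent j x ▸ hgr x hx j
  refine ⟨fun i => (P.resolution (i + 1)).rank, fun i => (P.resolution (i + 1)).deg,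
    fun i => (P.resolution (i + 1)).cover, P.cover, fun i p => (P.resolution (i + 1)).wt p.1,
    fun i => (P.resolution (i + 1)).isEquivariant_cover, P.isEquivariant_cover, P.range_cover,
    (P.resolution 1).range_cover, fun i => (P.resolution (i + 2)).range_cover, fun p q => ?_,
    fun i p q => (hP.resolution (i + 1)).isHomogeneousOfDegree_cover_single p q⟩
  rcases hP.isHomogeneousOfDegree_cover_single p q with h | ⟨-, h⟩
  · exact h ▸ MvPolynomial.isHomogeneous_zero _ _ _
  · exact h

/-- Let `K` be a Noetherian commutative ring and `c ≥ 1`. Every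
Inc-submodule `ℳ` of a finitely generated free Inc-module `ℱ = ⊕_{i=1}^r F^{Inc,d_i}`
over `𝒫 = K[x_{i,j} : i ∈ [c], j ∈ ℕ]` admits a free resolution
`⋯ → ℱ₂ → ℱ₁ → ℳ → 0` in which each `ℱ_i` is a free Inc-module over `𝒫`, finitely
generated as an Inc-module, and all differentials and the augmentation are
Inc-equivariant `𝒫`-module homomorphisms. Moreover, if `ℳ` is graded (for the
standard grading of `𝒫`), then such a resolution exists with all differentials of
degree zero. -/
theorem stmt_18 (K : Type) [CommRing K] [IsNoetherianRing K] (c : ℕ) (hc : 1 ≤ c)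
    {r : ℕ} (d : Fin r → ℕ)
    (ℳ : Submodule (PInf K c) (FreeIncP K c d))
    (hM : ∀ (τ : Inc) (x : FreeIncP K c d), x ∈ ℳ → freeIncPAct K c τ x ∈ ℳ) :
    -- an Inc-equivariant free resolution `⋯ → ℱ₂ → ℱ₁ → ℳ → 0` exists
    (∃ (rk : ℕ → ℕ) (dd : ∀ i, Fin (rk i) → ℕ)
      (δ : ∀ i, FreeIncP K c (dd (i + 1)) →ₗ[PInf K c] FreeIncP K c (dd i))
      (ε : FreeIncP K c (dd 0) →ₗ[PInf K c] FreeIncP K c d),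
      -- the differentials and the augmentation are Inc-equivariant
      (∀ (i : ℕ) (τ : Inc) (x : FreeIncP K c (dd (i + 1))),
        δ i (freeIncPAct K c τ x) = freeIncPAct K c τ (δ i x)) ∧
      (∀ (τ : Inc) (x : FreeIncP K c (dd 0)),
        ε (freeIncPAct K c τ x) = freeIncPAct K c τ (ε x)) ∧
      -- exactness: `ℱ₁ → ℳ → 0` and `range = ker` at every step
      LinearMap.range ε = ℳ ∧
      LinearMap.range (δ 0) = LinearMap.ker ε ∧
      (∀ i, LinearMap.range (δ (i + 1)) = LinearMap.ker (δ i))) ∧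
    -- moreover, if `ℳ` is a graded submodule, the resolution can be chosen graded
    -- with degree-zero differentials
    ((∀ x ∈ ℳ, ∀ j : ℕ, homCompF K c j x ∈ ℳ) →
      ∃ (rk : ℕ → ℕ) (dd : ∀ i, Fin (rk i) → ℕ)
        (δ : ∀ i, FreeIncP K c (dd (i + 1)) →ₗ[PInf K c] FreeIncP K c (dd i))
        (ε : FreeIncP K c (dd 0) →ₗ[PInf K c] FreeIncP K c d)
        -- degrees of the basis elements of the free modules in the resolution
        (t : ∀ i, (Σ j : Fin (rk i), OIHomNat (dd i j)) → ℕ),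
        (∀ (i : ℕ) (τ : Inc) (x : FreeIncP K c (dd (i + 1))),
          δ i (freeIncPAct K c τ x) = freeIncPAct K c τ (δ i x)) ∧
        (∀ (τ : Inc) (x : FreeIncP K c (dd 0)),
          ε (freeIncPAct K c τ x) = freeIncPAct K c τ (ε x)) ∧
        LinearMap.range ε = ℳ ∧
        LinearMap.range (δ 0) = LinearMap.ker ε ∧
        (∀ i, LinearMap.range (δ (i + 1)) = LinearMap.ker (δ i)) ∧
        -- the augmentation has degree zero: the image of a basis element of
        -- degree `t 0 p` is homogeneous of degree `t 0 p`
        (∀ (p : Σ j : Fin (rk 0), OIHomNat (dd 0 j))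
            (q : Σ i : Fin r, OIHomNat (d i)),
          ((ε (Finsupp.single p 1)) q).IsHomogeneous (t 0 p)) ∧
        -- the differentials have degree zero
        (∀ (i : ℕ) (p : Σ j : Fin (rk (i + 1)), OIHomNat (dd (i + 1) j))
            (q : Σ j : Fin (rk i), OIHomNat (dd i j)),
          ((δ i (Finsupp.single p 1)) q = 0) ∨
          (t i q ≤ t (i + 1) p ∧
            ((δ i (Finsupp.single p 1)) q).IsHomogeneous (t (i + 1) p - t i q)))) :=
  stmt_18_general K c d ℳ hM
end
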